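/- arXiv:2605.22708 — 15 statements merged into one kernel-verified Lean document; each statement's English description precedes it below -/
import Mathlib

section
/- Let k = 2m+1 and n = 4m for a positive integer m. Assign weights x_1 = ... = x_{2m} = 1 and x_{2m+1} = ... = x_{4m} = -1, so the total sum is 0. Then the number of k-element subsets of [n] with nonnegative weight sum equals (1/2)·C(4m, 2m+1), which is strictly less than C(4m-1, 2m). -/
open Finset
open scoped Classical

theorem stmt0 (m : ℕ) (hm : 0 < m)
    (x : Fin (4 * m) → ℝ) (hx : ∀ i, x i = if (i : ℕ) < 2 * m then 1 else -1) :
    2 * (((Finset.univ : Finset (Fin (4 * m))).powersetCard (2 * m + 1)).filter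
        (fun A => 0 ≤ ∑ i ∈ A, x i)).card = Nat.choose (4 * m) (2 * m + 1) ∧
    (((Finset.univ : Finset (Fin (4 * m))).powersetCard (2 * m + 1)).filter
        (fun A => 0 ≤ ∑ i ∈ A, x i)).card < Nat.choose (4 * m - 1) (2 * m) := by
  haveI : NeZero (4 * m) := ⟨by omega⟩
  set c : Fin (4 * m) := ⟨2 * m, by omega⟩ with hc
  -- shifting by c negates the weight
  have hxc : ∀ i : Fin (4 * m), x (i + c) = - x i := by
    intro i
    have hvi : (i : ℕ) < 4 * m := i.isLt
    have hval : ((i + c : Fin (4 * m)) : ℕ) = ((i : ℕ) + 2 * m) % (4 * m) := by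
      simp [Fin.add_def, hc]
    rw [hx, hx]
    by_cases h : (i : ℕ) < 2 * m
    · have hv2 : ((i + c : Fin (4 * m)) : ℕ) = (i : ℕ) + 2 * m := by
        rw [hval, Nat.mod_eq_of_lt (by omega)]
      rw [hv2, if_pos h, if_neg (by omega)]
      try norm_num
    · have hv2 : ((i + c : Fin (4 * m)) : ℕ) = (i : ℕ) + 2 * m - 4 * m := by
        rw [hval, Nat.mod_eq_sub_mod (by omega), Nat.mod_eq_of_lt (by omega)]
      rw [hv2, if_neg h, if_pos (by omega)]
      try norm_num
  have hcc : c + c = 0 := by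
    apply Fin.ext
    simp only [Fin.add_def, hc, Fin.val_zero]
    rw [show 2 * m + 2 * m = 4 * m from by ring]
    exact Nat.mod_self _
  set e : Fin (4 * m) ≃ Fin (4 * m) := Equiv.addRight c with he
  have hee : ∀ i, e (e i) = i := by
    intro i
    simp [he, Equiv.addRight, add_assoc, hcc]
  have hmapmap : ∀ A : Finset (Fin (4 * m)),
      (A.map e.toEmbedding).map e.toEmbedding = A := by
    intro A
    rw [Finset.map_map]
    have : e.toEmbedding.trans e.toEmbedding = Function.Embedding.refl _ := by
      ext i; simp [hee i]
    rw [this, Finset.map_refl]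
  have hsummap : ∀ A : Finset (Fin (4 * m)),
      ∑ i ∈ A.map e.toEmbedding, x i = - ∑ i ∈ A, x i := by
    intro A
    rw [Finset.sum_map, ← Finset.sum_neg_distrib]
    refine Finset.sum_congr rfl fun i _ => ?_
    have : e.toEmbedding i = i + c := rfl
    rw [this, hxc]
  -- sums over (2m+1)-subsets are never zero
  have hne : ∀ A : Finset (Fin (4 * m)), A.card = 2 * m + 1 → ∑ i ∈ A, x i ≠ 0 := by
    intro A hA
    set p : Fin (4 * m) → Prop := fun i => (i : ℕ) < 2 * m with hp
    set a := (A.filter p).card with ha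
    set b := (A.filter (fun i => ¬ p i)).card with hb
    have hab : a + b = 2 * m + 1 := by
      rw [ha, hb, Finset.card_filter_add_card_filter_not, hA]
    have hS : ∑ i ∈ A, x i = (a : ℝ) - b := by
      rw [← Finset.sum_filter_add_sum_filter_not A p]
      have h1 : ∑ i ∈ A.filter p, x i = (a : ℝ) := by
        rw [Finset.sum_congr rfl (fun i hi => ?_), Finset.sum_const, nsmul_eq_mul, mul_one]
        rw [hx, if_pos (Finset.mem_filter.mp hi).2]
      have h2 : ∑ i ∈ A.filter (fun i => ¬ p i), x i = -(b : ℝ) := by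
        rw [Finset.sum_congr rfl (fun i hi => ?_), Finset.sum_const, nsmul_eq_mul, mul_neg_one]
        rw [hx, if_neg (Finset.mem_filter.mp hi).2]
      rw [h1, h2]; ring
    rw [hS]
    intro h
    have h' : (a : ℝ) = b := by linarith
    have : a = b := Nat.cast_inj.mp h'
    omega
  set S := (Finset.univ : Finset (Fin (4 * m))).powersetCard (2 * m + 1) with hSdef
  have hcardS : ∀ A ∈ S, A.card = 2 * m + 1 := by
    intro A hA
    exact (Finset.mem_powersetCard_univ.mp hA)
  have hmemmap : ∀ A ∈ S, A.map e.toEmbedding ∈ S := by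
    intro A hA
    rw [Finset.mem_powersetCard_univ, Finset.card_map]
    exact hcardS A hA
  have key : (S.filter (fun A => 0 ≤ ∑ i ∈ A, x i)).card
      = (S.filter (fun A => ¬ 0 ≤ ∑ i ∈ A, x i)).card := by
    refine Finset.card_bij' (fun A _ => A.map e.toEmbedding)
      (fun A _ => A.map e.toEmbedding) ?_ ?_ ?_ ?_
    · intro A hA
      have hA' := Finset.mem_filter.mp hA
      refine Finset.mem_filter.mpr ⟨hmemmap A hA'.1, ?_⟩
      have h0 : ∑ i ∈ A, x i ≠ 0 := hne A (hcardS A hA'.1)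
      have hpos : 0 < ∑ i ∈ A, x i := lt_of_le_of_ne hA'.2 (Ne.symm h0)
      rw [hsummap A]
      linarith
    · intro A hA
      have hA' := Finset.mem_filter.mp hA
      refine Finset.mem_filter.mpr ⟨hmemmap A hA'.1, ?_⟩
      have hneg : ∑ i ∈ A, x i < 0 := lt_of_not_ge hA'.2
      rw [hsummap A]
      linarith
    · intro A hA; exact hmapmap A
    · intro A hA; exact hmapmap A
  have htot : (S.filter (fun A => 0 ≤ ∑ i ∈ A, x i)).card
      + (S.filter (fun A => ¬ 0 ≤ ∑ i ∈ A, x i)).card = S.card :=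
    Finset.card_filter_add_card_filter_not _
  have hScard : S.card = Nat.choose (4 * m) (2 * m + 1) := by
    rw [hSdef, Finset.card_powersetCard, Finset.card_univ, Fintype.card_fin]
  have h2N : 2 * (S.filter (fun A => 0 ≤ ∑ i ∈ A, x i)).card
      = Nat.choose (4 * m) (2 * m + 1) := by omega
  have hpascal : Nat.choose (4 * m) (2 * m + 1) =
      Nat.choose (4 * m - 1) (2 * m) + Nat.choose (4 * m - 1) (2 * m + 1) := by
    have h4 : 4 * m = (4 * m - 1) + 1 := by omega
    calc Nat.choose (4 * m) (2 * m + 1)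
        = Nat.choose ((4 * m - 1) + 1) (2 * m + 1) := by rw [← h4]
      _ = Nat.choose (4 * m - 1) (2 * m) + Nat.choose (4 * m - 1) (2 * m + 1) :=
          Nat.choose_succ_succ _ _
  have hlt : Nat.choose (4 * m - 1) (2 * m + 1) < Nat.choose (4 * m - 1) (2 * m) := by
    have h1 := Nat.choose_succ_right_eq (4 * m - 1) (2 * m)
    have hsub : 4 * m - 1 - 2 * m = 2 * m - 1 := by omega
    rw [hsub] at h1
    have hpos : 0 < Nat.choose (4 * m - 1) (2 * m) := Nat.choose_pos (by omega)
    have h2 : Nat.choose (4 * m - 1) (2 * m + 1) * (2 * m + 1) <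
        Nat.choose (4 * m - 1) (2 * m) * (2 * m + 1) := by
      rw [h1]
      exact mul_lt_mul_of_pos_left (by omega) hpos
    exact Nat.lt_of_mul_lt_mul_right h2
  exact ⟨h2N, by omega⟩
end

section
/- Let k > 2 and n = 3k+1. Assign weights x_1 = x_2 = x_3 = 2-3k and x_4 = ... = x_{3k+1} = 3 (total sum is 0). Then a k-subset of [n] has nonnegative weight sum if and only if it contains none of the first three elements; hence the number of nonnegative k-subsets is C(3k-2, k), which is strictly less than C(3k, k-1). -/
open Finset
open scoped Classical

theorem stmt1 (k : ℕ) (hk : 2 < k)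
    (x : Fin (3 * k + 1) → ℝ)
    (hx : ∀ i, x i = if (i : ℕ) < 3 then 2 - 3 * (k : ℝ) else 3) :
    (∀ A : Finset (Fin (3 * k + 1)), A.card = k →
      (0 ≤ ∑ i ∈ A, x i ↔ ∀ i ∈ A, 3 ≤ (i : ℕ))) ∧
    (((Finset.univ : Finset (Fin (3 * k + 1))).powersetCard k).filter
        (fun A => 0 ≤ ∑ i ∈ A, x i)).card = Nat.choose (3 * k - 2) k ∧
    Nat.choose (3 * k - 2) k < Nat.choose (3 * k) (k - 1) := by
  have hsum : ∀ A : Finset (Fin (3 * k + 1)), A.card = k →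
      (0 ≤ ∑ i ∈ A, x i ↔ ∀ i ∈ A, 3 ≤ (i : ℕ)) := by
    intro A hA
    set p : Fin (3 * k + 1) → Prop := fun i => (i : ℕ) < 3 with hp
    have hsplit := Finset.sum_filter_add_sum_filter_not A p x
    have h1 : ∑ i ∈ A.filter p, x i = (A.filter p).card * (2 - 3 * (k : ℝ)) := by
      rw [Finset.sum_congr rfl (fun i hi => by
        rw [hx i, if_pos (Finset.mem_filter.mp hi).2]), Finset.sum_const, nsmul_eq_mul]
    have h2 : ∑ i ∈ A.filter (fun i => ¬ p i), x i
        = (A.filter (fun i => ¬ p i)).card * 3 := by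
      rw [Finset.sum_congr rfl (fun i hi => by
        rw [hx i, if_neg (Finset.mem_filter.mp hi).2]), Finset.sum_const, nsmul_eq_mul]
    have hcard : (A.filter p).card + (A.filter (fun i => ¬ p i)).card = k := by
      rw [Finset.card_filter_add_card_filter_not, hA]
    constructor
    · intro h i hiA
      by_contra hlt
      push_neg at hlt
      have h1le : 1 ≤ (A.filter p).card :=
        Finset.card_pos.mpr ⟨i, Finset.mem_filter.mpr ⟨hiA, hlt⟩⟩
      rw [← hsplit, h1, h2] at h
      have hc : ((A.filter (fun i => ¬ p i)).card : ℝ)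
          = (k : ℝ) - (A.filter p).card := by
        have := hcard; push_cast [← this]; ring
      rw [hc] at h
      have h1le' : (1 : ℝ) ≤ (A.filter p).card := by exact_mod_cast h1le
      have hk' : (3 : ℝ) ≤ (k : ℝ) := by exact_mod_cast hk
      nlinarith
    · intro h
      have hBempty : A.filter p = ∅ := by
        apply Finset.filter_eq_empty_iff.mpr
        intro i hi
        exact not_lt.mpr (h i hi)
      rw [← hsplit, h1, h2, hBempty]
      have : (A.filter (fun i => ¬ p i)).card = k := by
        have h0 : (A.filter p).card = 0 := by rw [hBempty]; simp
        omega
      rw [this]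
      simp only [Finset.card_empty, Nat.cast_zero, zero_mul, zero_add]
      positivity
  refine ⟨hsum, ?_, ?_⟩
  · -- counting part
    have h3lt : 3 < 3 * k + 1 := by omega
    set S : Finset (Fin (3 * k + 1)) :=
      (univ : Finset (Fin (3 * k + 1))).filter (fun i : Fin (3 * k + 1) => 3 ≤ (i : ℕ)) with hS
    have hScard : S.card = 3 * k - 2 := by
      have he : S = Finset.Ici (⟨3, h3lt⟩ : Fin (3 * k + 1)) := by
        ext i
        simp [hS, Fin.le_def]
      rw [he, Fin.card_Ici]
      have hv : ((⟨3, h3lt⟩ : Fin (3 * k + 1)) : ℕ) = 3 := rfl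
      rw [hv]
      omega
    have hfil : (((Finset.univ : Finset (Fin (3 * k + 1))).powersetCard k).filter
        (fun A => 0 ≤ ∑ i ∈ A, x i)) = S.powersetCard k := by
      ext A
      simp only [Finset.mem_filter, Finset.mem_powersetCard]
      constructor
      · rintro ⟨⟨hsub, hAk⟩, hge⟩
        refine ⟨?_, hAk⟩
        intro i hi
        rw [hS, Finset.mem_filter]
        exact ⟨Finset.mem_univ i, (hsum A hAk).mp hge i hi⟩
      · rintro ⟨hsub, hAk⟩
        refine ⟨⟨Finset.subset_univ A, hAk⟩, ?_⟩
        refine (hsum A hAk).mpr ?_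
        intro i hi
        have := hsub hi
        rw [hS, Finset.mem_filter] at this
        exact this.2
    rw [hfil, Finset.card_powersetCard, hScard]
  · obtain ⟨m, rfl⟩ : ∃ m, k = m + 3 := ⟨k - 3, by omega⟩
    rw [show 3 * (m + 3) - 2 = 3 * m + 7 by omega, show 3 * (m + 3) = 3 * m + 9 by omega,
      show m + 3 - 1 = m + 2 by omega]
    have ha := Nat.choose_mul_factorial_mul_factorial (show m + 3 ≤ 3 * m + 7 by omega)
    have hb := Nat.choose_mul_factorial_mul_factorial (show m + 2 ≤ 3 * m + 9 by omega)
    rw [show 3 * m + 7 - (m + 3) = 2 * m + 4 by omega] at ha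
    rw [show 3 * m + 9 - (m + 2) = 2 * m + 7 by omega] at hb
    have f9 : (3 * m + 9).factorial = (3 * m + 9) * ((3 * m + 8) * (3 * m + 7).factorial) := by
      rw [show 3 * m + 9 = (3 * m + 8) + 1 from rfl, Nat.factorial_succ,
        show 3 * m + 8 = (3 * m + 7) + 1 from rfl, Nat.factorial_succ]
    have f7 : (2 * m + 7).factorial =
        (2 * m + 7) * ((2 * m + 6) * ((2 * m + 5) * (2 * m + 4).factorial)) := by
      rw [show 2 * m + 7 = (2 * m + 6) + 1 from rfl, Nat.factorial_succ,
        show 2 * m + 6 = (2 * m + 5) + 1 from rfl, Nat.factorial_succ,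
        show 2 * m + 5 = (2 * m + 4) + 1 from rfl, Nat.factorial_succ]
    have f3 : (m + 3).factorial = (m + 3) * (m + 2).factorial := by
      rw [show m + 3 = (m + 2) + 1 from rfl, Nat.factorial_succ]
    rw [f9, ← ha, f3, f7] at hb
    have hP : 0 < (m + 2).factorial * (2 * m + 4).factorial :=
      Nat.mul_pos (Nat.factorial_pos _) (Nat.factorial_pos _)
    have key : Nat.choose (3 * m + 9) (m + 2) * ((2 * m + 7) * ((2 * m + 6) * (2 * m + 5)))
        = Nat.choose (3 * m + 7) (m + 3) * ((3 * m + 9) * ((3 * m + 8) * (m + 3))) := by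
      apply Nat.eq_of_mul_eq_mul_right hP
      ring_nf
      ring_nf at hb
      exact hb
    have ha0 : 0 < Nat.choose (3 * m + 7) (m + 3) := Nat.choose_pos (by omega)
    have hlt : (2 * m + 7) * ((2 * m + 6) * (2 * m + 5))
        < (3 * m + 9) * ((3 * m + 8) * (m + 3)) := by nlinarith [sq_nonneg m]
    have h2 : Nat.choose (3 * m + 7) (m + 3) * ((2 * m + 7) * ((2 * m + 6) * (2 * m + 5)))
        < Nat.choose (3 * m + 9) (m + 2) * ((2 * m + 7) * ((2 * m + 6) * (2 * m + 5))) := by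
      rw [key]
      exact Nat.mul_lt_mul_of_le_of_lt (le_refl _) hlt ha0
    exact Nat.lt_of_mul_lt_mul_right h2
end

section
/- Let n, k be positive integers with k dividing n. If the complete k-uniform hypergraph on n vertices decomposes into C(n-1, k-1) pairwise edge-disjoint perfect matchings (Baranyai's theorem), then for any x_1, ..., x_n ∈ ℝ with nonnegative sum, there exist at least C(n-1, k-1) k-element subsets of [n] with nonnegative sum. -/
open Finset
open scoped Classical

theorem stmt2 (n k : ℕ) (hk : 0 < k) (hn : 0 < n) (hdvd : k ∣ n)
    (M : Fin (Nat.choose (n - 1) (k - 1)) → Finset (Finset (Fin n)))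
    (hk_unif : ∀ i, ∀ e ∈ M i, e.card = k)
    (hpd : ∀ i, (↑(M i) : Set (Finset (Fin n))).PairwiseDisjoint id)
    (hcover : ∀ i, (M i).biUnion id = (Finset.univ : Finset (Fin n)))
    (hdisj : ∀ i j, i ≠ j → Disjoint (M i) (M j))
    (x : Fin n → ℝ) (hx : 0 ≤ ∑ v, x v) :
    Nat.choose (n - 1) (k - 1) ≤
      (((Finset.univ : Finset (Fin n)).powersetCard k).filter
        (fun A => 0 ≤ ∑ v ∈ A, x v)).card := by
  -- For each matching i, choose an edge with nonnegative sum.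
  have hpick : ∀ i, ∃ e ∈ M i, 0 ≤ ∑ v ∈ e, x v := by
    intro i
    by_contra h
    push_neg at h
    have hsum : ∑ v, x v = ∑ e ∈ M i, ∑ v ∈ e, x v := by
      rw [← hcover i, Finset.sum_biUnion (hpd i)]
      rfl
    have hne : (M i).Nonempty := by
      by_contra hne
      rw [Finset.not_nonempty_iff_eq_empty] at hne
      have h2 := hcover i
      rw [hne] at h2
      simp only [Finset.biUnion_empty] at h2
      have : (⟨0, hn⟩ : Fin n) ∈ (∅ : Finset (Fin n)) := h2 ▸ Finset.mem_univ _
      simp at this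
    have : ∑ e ∈ M i, ∑ v ∈ e, x v < 0 :=
      Finset.sum_neg (fun e he => h e he) hne
    linarith [hx, hsum ▸ hx]
  choose f hf hf0 using hpick
  have hinj : Set.InjOn f (Finset.univ : Finset (Fin (Nat.choose (n-1) (k-1)))) := by
    intro i _ j _ hij
    by_contra hne
    exact (Finset.disjoint_left.mp (hdisj i j hne) (hf i)) (hij ▸ hf j)
  calc Nat.choose (n - 1) (k - 1)
      = (Finset.univ : Finset (Fin (Nat.choose (n-1) (k-1)))).card := by simp
    _ ≤ _ := by
        apply Finset.card_le_card_of_injOn f _ hinj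
        intro i _
        simp only [Finset.mem_coe, Finset.mem_filter, Finset.mem_powersetCard]
        exact ⟨⟨Finset.subset_univ _, hk_unif i _ (hf i)⟩, hf0 i⟩
end

section
/- A graph G = (V, E) has the MMS property if and only if for every edge subset E' ⊆ E with |E'| ≤ δ(G) − 1, every independent set A of G − E' admits a matching in G − E' covering every vertex of A. -/
open Finset
open scoped Classical

/-- A graph has the MMS property if every weighting with nonnegative total sum
induces at least `δ(G)` nonnegative edges. -/
def SimpleGraph.HasMMS {V : Type*} [Fintype V] [DecidableEq V]
    (G : SimpleGraph V) [DecidableRel G.Adj] : Prop :=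
  ∀ f : V → ℝ, 0 ≤ ∑ v, f v →
    G.minDegree ≤ (G.edgeFinset.filter fun e =>
      0 ≤ Sym2.lift ⟨fun u v => f u + f v, fun _ _ => by ring⟩ e).card

private lemma mms_aux (a b c : ℝ) (ha : 0 ≤ a) (hc : 0 ≤ c) :
    0 ≤ a * (2 * b + 1) - b * (2 * a) - c * (a / (c + 1)) := by
  have h1 : (0:ℝ) < c + 1 := by linarith
  have h2 : a * (2 * b + 1) - b * (2 * a) - c * (a / (c + 1)) = a / (c + 1) := by
    field_simp
    ring
  rw [h2]
  positivity

theorem stmt3 {V : Type*} [Fintype V] [DecidableEq V]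
    (G : SimpleGraph V) [DecidableRel G.Adj] :
    G.HasMMS ↔
      ∀ E' : Finset (Sym2 V), ↑E' ⊆ G.edgeSet → E'.card < G.minDegree →
        ∀ A : Set V, (∀ u ∈ A, ∀ v ∈ A, ¬ (G.deleteEdges ↑E').Adj u v) →
          ∃ M : (G.deleteEdges ↑E').Subgraph, M.IsMatching ∧ A ⊆ M.verts := by
  constructor
  · intro hmms E' hE' hcard A hind
    set H := G.deleteEdges (↑E' : Set (Sym2 V)) with hH
    have hall : ∀ s : Finset ↥A, s.card ≤ (s.biUnion fun a => H.neighborFinset ↑a).card := by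
      by_contra hc
      push_neg at hc
      obtain ⟨s, hs⟩ := hc
      set Sf : Finset V := s.image (fun a : ↑A => (a : V)) with hSf
      set Nf : Finset V := s.biUnion (fun a => H.neighborFinset ↑a) with hNf
      have hScard : Sf.card = s.card := by
        rw [hSf]; exact Finset.card_image_of_injective s Subtype.coe_injective
      have hSfA : ∀ v ∈ Sf, v ∈ A := by
        intro v hv
        rw [hSf, Finset.mem_image] at hv
        obtain ⟨a, _, rfl⟩ := hv
        exact a.2
      have hNfadj : ∀ v ∈ Nf, ∃ u ∈ A, H.Adj u v := by
        intro v hv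
        simp only [hNf, Finset.mem_biUnion] at hv
        obtain ⟨a, _, ha⟩ := hv
        exact ⟨↑a, a.2, (SimpleGraph.mem_neighborFinset _ _ _).mp ha⟩
      have hdisj : Disjoint Sf Nf := by
        rw [Finset.disjoint_left]
        intro v hvS hvN
        obtain ⟨u, hu, hadj⟩ := hNfadj v hvN
        exact hind u hu v (hSfA v hvS) hadj
      set Rf : Finset V := Finset.univ \ (Sf ∪ Nf) with hRf
      have hn2pos : 1 ≤ s.card := lt_of_le_of_lt (Nat.zero_le _) hs
      set ε : ℝ := (s.card : ℝ) / (Rf.card + 1) with hεdef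
      have hε : 0 < ε := by
        apply div_pos
        · exact_mod_cast hn2pos
        · positivity
      set f : V → ℝ := fun v => if v ∈ Sf then (2 * Nf.card + 1 : ℝ)
        else if v ∈ Nf then -(2 * s.card) else -ε with hf
      have hfS : ∀ v ∈ Sf, f v = 2 * Nf.card + 1 := by
        intro v hv; simp only [hf, if_pos hv]
      have hfN : ∀ v ∈ Nf, f v = -(2 * s.card) := by
        intro v hv
        have : v ∉ Sf := Finset.disjoint_right.mp hdisj hv
        simp only [hf, if_neg this, if_pos hv]
      have hfR : ∀ v ∈ Rf, f v = -ε := by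
        intro v hv
        rw [hRf, Finset.mem_sdiff, Finset.mem_union] at hv
        push_neg at hv
        simp only [hf, if_neg hv.2.1, if_neg hv.2.2]
      have hsum : ∑ v, f v = s.card * (2 * Nf.card + 1) - Nf.card * (2 * s.card)
          - Rf.card * ε := by
        have h1 : ∑ v ∈ Rf, f v + ∑ v ∈ Sf ∪ Nf, f v = ∑ v, f v :=
          Finset.sum_sdiff (Finset.subset_univ _)
        have h2 : ∑ v ∈ Sf ∪ Nf, f v = ∑ v ∈ Sf, f v + ∑ v ∈ Nf, f v :=
          Finset.sum_union hdisj
        have h3 : ∑ v ∈ Sf, f v = s.card * (2 * Nf.card + 1) := by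
          rw [Finset.sum_congr rfl hfS, Finset.sum_const, hScard, nsmul_eq_mul]
        have h4 : ∑ v ∈ Nf, f v = -(Nf.card * (2 * s.card)) := by
          rw [Finset.sum_congr rfl hfN, Finset.sum_const, nsmul_eq_mul]
          ring
        have h5 : ∑ v ∈ Rf, f v = -(Rf.card * ε) := by
          rw [Finset.sum_congr rfl hfR, Finset.sum_const, nsmul_eq_mul]
          ring
        rw [← h1, h2, h3, h4, h5]; ring
      have hf0 : 0 ≤ ∑ v, f v := by
        rw [hsum, hεdef]
        exact mms_aux _ _ _ (Nat.cast_nonneg _) (Nat.cast_nonneg _)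
      have hmain := hmms f hf0
      have hsub : (G.edgeFinset.filter fun e =>
          0 ≤ Sym2.lift ⟨fun u v => f u + f v, fun _ _ => by ring⟩ e) ⊆ E' := by
        intro e he
        induction e using Sym2.ind with
        | _ u v =>
          rw [Finset.mem_filter] at he
          obtain ⟨he1, he2⟩ := he
          rw [Sym2.lift_mk] at he2
          have he2' : 0 ≤ f u + f v := he2
          have hadj : G.Adj u v := SimpleGraph.mem_edgeFinset.mp he1
          by_contra heE'
          have hHadj : H.Adj u v := by
            rw [hH, SimpleGraph.deleteEdges_adj]
            exact ⟨hadj, by simpa using heE'⟩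
          have hns : (Nf.card : ℝ) + 1 ≤ s.card := by exact_mod_cast Nat.succ_le_of_lt hs
          have hSN : ∀ x y, x ∈ Sf → H.Adj x y → y ∈ Nf := by
            intro x y hx hxy
            simp only [hSf, Finset.mem_image] at hx
            obtain ⟨a, ha, rfl⟩ := hx
            rw [hNf, Finset.mem_biUnion]
            exact ⟨a, ha, (SimpleGraph.mem_neighborFinset _ _ _).mpr hxy⟩
          have hneg : ∀ x, x ∉ Sf → f x < 0 := by
            intro x hx
            by_cases hxN : x ∈ Nf
            · rw [hfN x hxN]
              have : (0:ℝ) < s.card := by exact_mod_cast hn2pos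
              linarith
            · have : x ∈ Rf := by
                rw [hRf, Finset.mem_sdiff, Finset.mem_union]
                push_neg
                exact ⟨Finset.mem_univ _, hx, hxN⟩
              rw [hfR x this]
              linarith
          by_cases hu : u ∈ Sf <;> by_cases hv : v ∈ Sf
          · exact hind u (hSfA u hu) v (hSfA v hv) hHadj
          · have hvN := hSN u v hu hHadj
            rw [hfS u hu, hfN v hvN] at he2'
            linarith
          · have huN := hSN v u hv hHadj.symm
            rw [hfS v hv, hfN u huN] at he2'
            linarith
          · have := hneg u hu
            have := hneg v hv
            linarith
      have := le_trans hmain (Finset.card_le_card hsub)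
      omega
    obtain ⟨m, hinj, hm⟩ :=
      (Finset.all_card_le_biUnion_card_iff_exists_injective
        (fun a : ↥A => H.neighborFinset ↑a)).mp hall
    have hmadj : ∀ a : ↥A, H.Adj ↑a (m a) := fun a =>
      (SimpleGraph.mem_neighborFinset _ _ _).mp (hm a)
    have hmA : ∀ a : ↥A, m a ∉ A := fun a h => hind ↑a a.2 (m a) h (hmadj a)
    refine ⟨⟨A ∪ Set.range (fun a : ↥A => m a),
      fun u v => ∃ a : ↥A, (u = ↑a ∧ v = m a) ∨ (u = m a ∧ v = ↑a), ?_, ?_, ?_⟩, ?_, ?_⟩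
    · rintro u v ⟨a, (⟨rfl, rfl⟩ | ⟨rfl, rfl⟩)⟩
      · exact hmadj a
      · exact (hmadj a).symm
    · rintro u v ⟨a, (⟨rfl, -⟩ | ⟨rfl, -⟩)⟩
      · exact Or.inl a.2
      · exact Or.inr ⟨a, rfl⟩
    · refine ⟨?_⟩; rintro u v ⟨a, (⟨rfl, rfl⟩ | ⟨rfl, rfl⟩)⟩
      · exact ⟨a, Or.inr ⟨rfl, rfl⟩⟩
      · exact ⟨a, Or.inl ⟨rfl, rfl⟩⟩
    · intro v hv
      by_cases hvA : v ∈ A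
      · refine ⟨m ⟨v, hvA⟩, ⟨⟨v, hvA⟩, Or.inl ⟨rfl, rfl⟩⟩, ?_⟩
        rintro w ⟨b, (⟨hb1, hb2⟩ | ⟨hb1, hb2⟩)⟩
        · rw [hb2]
          exact congrArg m (Subtype.ext hb1.symm)
        · exact (hmA b (hb1 ▸ hvA)).elim
      · have hv' : v ∈ Set.range (fun a : ↥A => m a) := hv.resolve_left hvA
        obtain ⟨a, rfl⟩ := hv'
        refine ⟨↑a, ⟨a, Or.inr ⟨rfl, rfl⟩⟩, ?_⟩
        rintro w ⟨b, (⟨hb1, hb2⟩ | ⟨hb1, hb2⟩)⟩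
        · exact (hvA (by rw [hb1]; exact b.2)).elim
        · rw [hb2]
          exact congrArg _ (hinj hb1).symm
    · exact fun v hv => Or.inl hv
  · intro h f hf
    by_contra hlt
    push_neg at hlt
    set N := (G.edgeFinset.filter fun e =>
      0 ≤ Sym2.lift ⟨fun u v => f u + f v, fun _ _ => by ring⟩ e) with hN
    have hNsub : (↑N : Set (Sym2 V)) ⊆ G.edgeSet := by
      intro e he
      simp only [hN, Finset.coe_filter, Set.mem_setOf_eq] at he
      exact (SimpleGraph.mem_edgeFinset).mp he.1
    set A : Set V := {v | 0 ≤ f v} with hA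
    have hind : ∀ u ∈ A, ∀ v ∈ A, ¬ (G.deleteEdges (↑N : Set (Sym2 V))).Adj u v := by
      intro u hu v hv hadj
      rw [SimpleGraph.deleteEdges_adj] at hadj
      apply hadj.2
      simp only [hN, Finset.coe_filter, Set.mem_setOf_eq]
      refine ⟨SimpleGraph.mem_edgeFinset.mpr hadj.1, ?_⟩
      simp only [Sym2.lift_mk]
      exact add_nonneg hu hv
    obtain ⟨M, hM, hAM⟩ := h N hNsub hlt A hind
    -- pairing function
    set g : V → V := fun v => if hv : v ∈ M.verts then (hM hv).choose else v with hg
    have hgadj : ∀ v ∈ A, M.Adj v (g v) := by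
      intro v hv
      have hv' : v ∈ M.verts := hAM hv
      simp only [hg, dif_pos hv']
      exact (hM hv').choose_spec.1
    have hpair : ∀ v ∈ A, f v + f (g v) < 0 := by
      intro v hv
      have := M.adj_sub (hgadj v hv)
      rw [SimpleGraph.deleteEdges_adj] at this
      by_contra hge
      push_neg at hge
      apply this.2
      simp only [hN, Finset.coe_filter, Set.mem_setOf_eq]
      exact ⟨SimpleGraph.mem_edgeFinset.mpr this.1, by simpa using hge⟩
    have hgnot : ∀ v ∈ A, g v ∉ A := by
      intro v hv hgv
      have h1 := hpair v hv
      have : (0:ℝ) ≤ f v + f (g v) := add_nonneg hv hgv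
      linarith
    -- finset version
    set Af : Finset V := Finset.univ.filter (fun v => 0 ≤ f v) with hAf
    have hmemAf : ∀ v, v ∈ Af ↔ v ∈ A := by
      intro v; simp [hAf, hA]
    rcases isEmpty_or_nonempty V with hV | hV
    · have : G.minDegree = 0 := by
        simp [SimpleGraph.minDegree, Finset.univ_eq_empty]
      omega
    rcases Af.eq_empty_or_nonempty with hAe | hAne
    · -- all weights negative
      have : ∑ v, f v < ∑ _v : V, (0:ℝ) := by
        apply Finset.sum_lt_sum_of_nonempty Finset.univ_nonempty
        intro i _
        by_contra hge
        push_neg at hge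
        have : i ∈ Af := (hmemAf i).mpr hge
        simp [hAe] at this
      simp at this
      linarith
    · have hinj : Set.InjOn g ↑Af := by
        intro u hu u' hu' heq
        have hu'' := hgadj u ((hmemAf u).mp hu)
        have hu''' := hgadj u' ((hmemAf u').mp hu')
        rw [heq] at hu''
        have hw : g u' ∈ M.verts := M.edge_vert hu''.symm
        exact ((hM hw).unique hu''.symm hu'''.symm).symm ▸ rfl
      set Bf : Finset V := Af.image g with hBf
      have hBsub : Bf ⊆ Finset.univ \ Af := by
        intro v hv
        simp only [hBf, Finset.mem_image] at hv
        obtain ⟨a, ha, rfl⟩ := hv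
        rw [Finset.mem_sdiff]
        refine ⟨Finset.mem_univ _, ?_⟩
        intro hcon
        exact hgnot a ((hmemAf a).mp ha) ((hmemAf _).mp hcon)
      have hsum1 : ∑ v ∈ Finset.univ \ Af, f v + ∑ v ∈ Af, f v = ∑ v, f v :=
        Finset.sum_sdiff (Finset.subset_univ _)
      have hsum2 : ∑ v ∈ Finset.univ \ Af, f v ≤ ∑ v ∈ Bf, f v := by
        have h2 := Finset.sum_sdiff hBsub (f := f)
        have h3 : ∑ v ∈ (Finset.univ \ Af) \ Bf, f v ≤ 0 := by
          apply Finset.sum_nonpos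
          intro v hv
          rw [Finset.mem_sdiff, Finset.mem_sdiff] at hv
          by_contra hge
          push_neg at hge
          exact hv.1.2 ((hmemAf v).mpr hge.le)
        linarith
      have hsum3 : ∑ v ∈ Bf, f v = ∑ v ∈ Af, f (g v) := by
        rw [hBf]
        exact Finset.sum_image hinj
      have hsum4 : ∑ v ∈ Af, (f v + f (g v)) < 0 := by
        have : ∑ v ∈ Af, (f v + f (g v)) < ∑ _v ∈ Af, (0:ℝ) := by
          apply Finset.sum_lt_sum_of_nonempty hAne
          intro i hi
          exact hpair i ((hmemAf i).mp hi)
        simpa using this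
      rw [Finset.sum_add_distrib] at hsum4
      linarith
end

section
/- Let C be a cycle on 2m+1 vertices and f : V(C) → ℝ with ∑_v f(v) ≥ 0. Suppose exactly one edge uv of C satisfies f(u) + f(v) ≥ 0. Then f(u) ≥ 0, f(v) ≥ 0, the number of vertices with nonnegative weight is exactly m+1, and for every other edge xy of C exactly one of f(x), f(y) is nonnegative. -/
open Finset
open scoped Classical
open scoped Fin.CommRing Fin.NatCast

lemma sum_split (g : ℕ → ℝ) (m : ℕ) :
    ∑ i ∈ Finset.range (2*m+1), g i = g 0 + ∑ j ∈ Finset.range m, (g (2*j+1) + g (2*j+2)) := by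
  induction m with
  | zero => simp
  | succ k ih =>
    have h : 2*(k+1)+1 = (2*k+1) + 1 + 1 := by ring
    have h2 : 2*k+1+1 = 2*k+2 := by ring
    rw [h, Finset.sum_range_succ, Finset.sum_range_succ, ih, Finset.sum_range_succ, h2]
    ring

lemma rot (m : ℕ) (g : Fin (2*m+1) → ℝ) (k : Fin (2*m+1)) :
    ∑ x, g x = g k + ∑ j ∈ Finset.range m, (g (k + ((2*j+1 : ℕ) : Fin (2*m+1))) + g (k + ((2*j+2 : ℕ) : Fin (2*m+1)))) := by
  have h1 : ∑ x, g x = ∑ x : Fin (2*m+1), g (k + x) := (Equiv.sum_comp (Equiv.addLeft k) g).symm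
  rw [h1]
  have h2 : ∑ x : Fin (2*m+1), g (k + x) = ∑ i ∈ Finset.range (2*m+1), g (k + (i : Fin (2*m+1))) := by
    rw [← Fin.sum_univ_eq_sum_range (fun i => g (k + (i : Fin (2*m+1))))]
    simp [Fin.cast_val_eq_self]
  rw [h2, sum_split]
  simp

lemma core_pos (m : ℕ) (hm : 0 < m) (g : Fin (2*m+1) → ℝ) (hs : 0 ≤ ∑ x, g x)
    (hneg : ∀ i : Fin (2*m+1), i ≠ 0 → g i + g (i+1) < 0) :
    ∀ k : Fin (2*m+1), (k = 0 ∨ (k : ℕ) % 2 = 1) → 0 < g k := by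
  intro k hk
  have hrot := rot m g k
  have hpair : ∀ j ∈ Finset.range m,
      g (k + ((2*j+1 : ℕ) : Fin (2*m+1))) + g (k + ((2*j+2 : ℕ) : Fin (2*m+1))) < (fun _ => (0:ℝ)) j := by
    intro j hj
    rw [Finset.mem_range] at hj
    have hcast : k + ((2*j+1 : ℕ) : Fin (2*m+1)) = ((k.val + (2*j+1) : ℕ) : Fin (2*m+1)) := by
      rw [eq_comm, Nat.cast_add, Fin.cast_val_eq_self]
    have hne : k + ((2*j+1 : ℕ) : Fin (2*m+1)) ≠ 0 := by
      rw [hcast]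
      intro h0
      have hdvd := Fin.natCast_eq_zero.mp h0
      have hklt : k.val < 2*m+1 := k.isLt
      have heq : k.val + (2*j+1) = 2*m+1 :=
        Nat.eq_of_dvd_of_lt_two_mul (by omega) hdvd (by omega)
      rcases hk with h | h
      · have hk0 : k.val = 0 := by rw [h]; rfl
        omega
      · omega
    have hsucc : k + ((2*j+1 : ℕ) : Fin (2*m+1)) + 1 = k + ((2*j+2 : ℕ) : Fin (2*m+1)) := by
      have : ((2*j+2 : ℕ) : Fin (2*m+1)) = ((2*j+1 : ℕ) : Fin (2*m+1)) + 1 := by push_cast; ring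
      rw [this, add_assoc]
    have := hneg _ hne
    rw [hsucc] at this
    simpa using this
  have hsum : ∑ j ∈ Finset.range m, (g (k + ((2*j+1 : ℕ) : Fin (2*m+1))) + g (k + ((2*j+2 : ℕ) : Fin (2*m+1)))) < 0 := by
    have := Finset.sum_lt_sum_of_nonempty (Finset.nonempty_range_iff.mpr hm.ne') hpair
    simpa using this
  linarith

lemma core_neg (m : ℕ) (hm : 0 < m) (g : Fin (2*m+1) → ℝ) (hs : 0 ≤ ∑ x, g x)
    (hneg : ∀ i : Fin (2*m+1), i ≠ 0 → g i + g (i+1) < 0) :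
    ∀ k : Fin (2*m+1), k ≠ 0 → (k : ℕ) % 2 = 0 → g k < 0 := by
  intro k hk0 hke
  have hkv0 : k.val ≠ 0 := fun h => hk0 (Fin.ext (by simp [h]))
  have hk2 : 2 ≤ k.val := by omega
  have hklt : k.val < 2*m+1 := k.isLt
  set i : Fin (2*m+1) := ((k.val - 1 : ℕ) : Fin (2*m+1)) with hi
  have hiv : i.val = k.val - 1 := by
    rw [hi, Fin.val_natCast, Nat.mod_eq_of_lt (by omega)]
  have hine : i ≠ 0 := by
    intro h
    rw [Fin.ext_iff, hiv] at h
    simp at h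
    omega
  have hik : i + 1 = k := by
    rw [hi, ← Nat.cast_add_one]
    have h : k.val - 1 + 1 = k.val := by omega
    rw [h, Fin.cast_val_eq_self]
  have hpos := core_pos m hm g hs hneg i (Or.inr (by omega))
  have := hneg i hine
  rw [hik] at this
  linarith

lemma cnt (m : ℕ) : ((Finset.range (2*m+1)).filter (fun i => i = 0 ∨ i % 2 = 1)).card = m + 1 := by
  induction m with
  | zero => decide
  | succ k ih =>
    have h : 2*(k+1)+1 = (2*k+1)+1+1 := by ring
    rw [h, Finset.range_add_one, Finset.range_add_one, Finset.filter_insert, Finset.filter_insert]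
    rw [if_neg (by omega), if_pos (by omega)]
    rw [Finset.card_insert_of_notMem (by simp), ih]

lemma cntFin (m : ℕ) (p : Fin (2*m+1) → Prop) [DecidablePred p]
    (hp : ∀ w : Fin (2*m+1), p w ↔ (w.val = 0 ∨ w.val % 2 = 1)) :
    ((Finset.univ : Finset (Fin (2*m+1))).filter p).card = m + 1 := by
  rw [Finset.card_filter]
  have h1 : ∀ w : Fin (2*m+1), (if p w then (1:ℕ) else 0) =
      (fun i : ℕ => if i = 0 ∨ i % 2 = 1 then (1:ℕ) else 0) w.val := by
    intro w
    simp only [if_congr (hp w) rfl rfl]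
  rw [Finset.sum_congr rfl (fun w _ => h1 w),
    Fin.sum_univ_eq_sum_range (fun i : ℕ => if i = 0 ∨ i % 2 = 1 then (1:ℕ) else 0) (2*m+1),
    ← Finset.card_filter, cnt]


theorem stmt4 (m : ℕ) (hm : 0 < m) (f : Fin (2 * m + 1) → ℝ)
    (hf : 0 ≤ ∑ v, f v)
    (u v : Fin (2 * m + 1)) (huv : (SimpleGraph.cycleGraph (2 * m + 1)).Adj u v)
    (h1 : 0 ≤ f u + f v)
    (huniq : ∀ x y, (SimpleGraph.cycleGraph (2 * m + 1)).Adj x y →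
      0 ≤ f x + f y → s(x, y) = s(u, v)) :
    0 ≤ f u ∧ 0 ≤ f v ∧
    ((Finset.univ : Finset (Fin (2 * m + 1))).filter fun w => 0 ≤ f w).card = m + 1 ∧
    ∀ x y, (SimpleGraph.cycleGraph (2 * m + 1)).Adj x y → s(x, y) ≠ s(u, v) →
      ((0 ≤ f x ∧ f y < 0) ∨ (0 ≤ f y ∧ f x < 0)) := by
  have hone : ((1 : Fin (2*m+1)) : ℕ) = 1 := by rw [Fin.val_one']; exact Nat.mod_eq_of_lt (by omega)
  have he : v - u = 1 ∨ v - u = -1 := by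
    rcases SimpleGraph.cycleGraph_adj'.mp huv with h | h
    · right
      have : u - v = 1 := Fin.ext (by rw [hone]; exact h)
      linear_combination -this
    · left
      exact Fin.ext (by rw [hone]; exact h)
  set e : Fin (2*m+1) := v - u with hedef
  have he2 : e * e = 1 := by rcases he with h | h <;> rw [h] <;> ring
  set σ : Fin (2*m+1) → Fin (2*m+1) := fun i => u + e * i with hσdef
  have hσ0 : σ 0 = u := by simp [hσdef]
  have hσ1 : σ 1 = v := by simp only [hσdef, mul_one]; rw [hedef]; ring
  have hstep : ∀ i, σ (i + 1) = σ i + e := by intro i; simp only [hσdef]; ring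
  have hadj : ∀ i, (SimpleGraph.cycleGraph (2*m+1)).Adj (σ i) (σ (i+1)) := by
    intro i
    rw [SimpleGraph.cycleGraph_adj']
    rcases he with h | h
    · right
      have h2 : σ (i+1) - σ i = e := by rw [hstep]; ring
      rw [h2, ← hedef] at *
      rw [h, hone]
    · left
      have h2 : σ i - σ (i+1) = -e := by rw [hstep]; ring
      rw [h2, h]
      simpa using hone
  have h2ne : (2 : Fin (2*m+1)) ≠ 0 := by
    intro h
    have hx : ((2 : ℕ) : Fin (2*m+1)) = 0 := by exact_mod_cast h
    have := Nat.le_of_dvd (by omega) (Fin.natCast_eq_zero.mp hx)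
    omega
  have hsym : ∀ i : Fin (2*m+1), s(σ i, σ (i+1)) = s(u,v) → i = 0 := by
    intro i h
    rw [Sym2.eq_iff] at h
    rcases h with ⟨ha, _⟩ | ⟨ha, hb⟩
    · simp only [hσdef] at ha
      have h3 : e * i = 0 := by linear_combination ha
      linear_combination e * h3 - i * he2
    · exfalso
      simp only [hσdef] at ha hb
      have hig : e * (i+1) = 0 := by linear_combination hb
      have hi1 : i + 1 = 0 := by linear_combination e * hig - (i+1) * he2
      have hi2 : e * i = e := by linear_combination ha - hedef
      have hi3 : i = 1 := by linear_combination e * hi2 - i * he2 + he2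
      exact h2ne (by linear_combination hi1 - hi3)
  set g : Fin (2*m+1) → ℝ := fun i => f (σ i) with hgdef
  have hgneg : ∀ i : Fin (2*m+1), i ≠ 0 → g i + g (i+1) < 0 := by
    intro i hi
    by_contra hle
    push_neg at hle
    exact hi (hsym i (huniq _ _ (hadj i) hle))
  have hσinj : Function.Injective σ := by
    intro a b hab
    simp only [hσdef] at hab
    have h3 : e * a = e * b := by linear_combination hab
    linear_combination e * h3 - a * he2 + b * he2
  have hσbij : Function.Bijective σ := Finite.injective_iff_bijective.mp hσinj
  have hgs : 0 ≤ ∑ x, g x := by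
    have h4 : ∑ x, g x = ∑ x, f x := Function.Bijective.sum_comp hσbij f
    linarith
  have hPos := core_pos m hm g hgs hgneg
  have hNeg := core_neg m hm g hgs hgneg
  refine ⟨?_, ?_, ?_, ?_⟩
  · have := hPos 0 (Or.inl rfl)
    simp only [hgdef, hσ0] at this
    linarith
  · have := hPos 1 (Or.inr (by rw [hone]))
    simp only [hgdef, hσ1] at this
    linarith
  · have hcard2 : ((Finset.univ : Finset (Fin (2*m+1))).filter fun w => 0 ≤ g w).card = m + 1 := by
      apply cntFin
      intro w
      constructor
      · intro hw
        by_contra hc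
        push_neg at hc
        have := hNeg w (fun h => hc.1 (by rw [h]; rfl)) (by omega)
        linarith
      · intro hw
        rcases hw with h | h
        · exact (hPos w (Or.inl (Fin.ext (by simpa using h)))).le
        · exact (hPos w (Or.inr h)).le
    rw [← hcard2]
    symm
    apply Finset.card_bij (fun a _ => σ a)
    · intro a ha
      rw [Finset.mem_filter] at ha ⊢
      exact ⟨Finset.mem_univ _, ha.2⟩
    · intro a _ b _ hab
      exact hσinj hab
    · intro b hb
      obtain ⟨a, rfl⟩ := hσbij.2 b
      rw [Finset.mem_filter] at hb
      exact ⟨a, Finset.mem_filter.mpr ⟨Finset.mem_univ _, hb.2⟩, rfl⟩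
  · have halt : ∀ i : Fin (2*m+1), i ≠ 0 →
        (0 ≤ g i ∧ g (i+1) < 0) ∨ (0 ≤ g (i+1) ∧ g i < 0) := by
      intro i hi
      by_cases hpar : (i : ℕ) % 2 = 1
      · left
        refine ⟨(hPos i (Or.inr hpar)).le, ?_⟩
        by_cases hlast : i = Fin.last (2*m)
        · exfalso
          have : (i : ℕ) = 2*m := by rw [hlast, Fin.val_last]
          omega
        · have hval : ((i+1 : Fin (2*m+1)) : ℕ) = (i : ℕ) + 1 :=
            Fin.val_add_one_of_lt (lt_of_le_of_ne (Fin.le_last i) hlast)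
          refine hNeg (i+1) (fun h => ?_) (by omega)
          rw [h] at hval
          simp at hval
      · right
        have hine : (i : ℕ) ≠ 0 := fun h => hi (Fin.ext (by simpa using h))
        refine ⟨?_, hNeg i hi (by omega)⟩
        by_cases hlast : i = Fin.last (2*m)
        · have h0 : i + 1 = 0 := by rw [hlast]; exact Fin.last_add_one (2*m)
          rw [h0]
          exact (hPos 0 (Or.inl rfl)).le
        · have hval : ((i+1 : Fin (2*m+1)) : ℕ) = (i : ℕ) + 1 :=
            Fin.val_add_one_of_lt (lt_of_le_of_ne (Fin.le_last i) hlast)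
          exact (hPos (i+1) (Or.inr (by omega))).le
    intro x y hxy hne
    have hd : y - x = e ∨ x - y = e := by
      rcases SimpleGraph.cycleGraph_adj'.mp hxy with h | h
      · have h' : x - y = 1 := Fin.ext (by rw [hone]; exact h)
        rcases he with h2 | h2
        · right; rw [h', h2]
        · left; rw [h2]; linear_combination -h'
      · have h' : y - x = 1 := Fin.ext (by rw [hone]; exact h)
        rcases he with h2 | h2
        · left; rw [h2]; exact h'
        · right; rw [h2]; linear_combination -h'
    rcases hd with hd | hd
    · set i : Fin (2*m+1) := e * (x - u) with hidef
      have hσi : σ i = x := by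
        simp only [hσdef, hidef]
        linear_combination (x - u) * he2
      have hσi1 : σ (i+1) = y := by rw [hstep, hσi]; linear_combination -hd
      have hi0 : i ≠ 0 := by
        intro h
        apply hne
        rw [← hσi, ← hσi1, h, zero_add, hσ0, hσ1]
      rcases halt i hi0 with ⟨ha, hb⟩ | ⟨ha, hb⟩
      · simp only [hgdef, hσi, hσi1] at ha hb
        exact Or.inl ⟨ha, hb⟩
      · simp only [hgdef, hσi, hσi1] at ha hb
        exact Or.inr ⟨ha, hb⟩
    · set i : Fin (2*m+1) := e * (y - u) with hidef
      have hσi : σ i = y := by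
        simp only [hσdef, hidef]
        linear_combination (y - u) * he2
      have hσi1 : σ (i+1) = x := by rw [hstep, hσi]; linear_combination -hd
      have hi0 : i ≠ 0 := by
        intro h
        apply hne
        rw [show s(x,y) = s(y,x) from Sym2.eq_swap, ← hσi, ← hσi1, h, zero_add, hσ0, hσ1]
      rcases halt i hi0 with ⟨ha, hb⟩ | ⟨ha, hb⟩
      · simp only [hgdef, hσi, hσi1] at ha hb
        exact Or.inr ⟨ha, hb⟩
      · simp only [hgdef, hσi, hσi1] at ha hb
        exact Or.inl ⟨ha, hb⟩
end

section
/- Let G be a graph with minimum degree δ, and let A ⊆ V(G) with |A| ≤ δ/2. Let Δ_A denote the maximum degree of the induced subgraph G[A]. Then the bipartite graph between A and its neighborhood N(A) (using only edges with one endpoint in A and one in N(A)\A) contains δ − Δ_A pairwise edge-disjoint matchings, each of size |A|. -/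
open Finset
open scoped Classical

-- Lemma 1: carve off a sub-function with given sum
lemma sub_row {Y : Type*} [Fintype Y] (k : ℕ) (c : Y → ℕ) (h : k ≤ ∑ y, c y) :
    ∃ d : Y → ℕ, (∀ y, d y ≤ c y) ∧ ∑ y, d y = k := by
  induction k generalizing c with
  | zero => exact ⟨fun _ => 0, fun _ => Nat.zero_le _, by simp⟩
  | succ k ih =>
    have hpos : 0 < ∑ y, c y := lt_of_lt_of_le (Nat.succ_pos k) h
    obtain ⟨y0, -, hy0⟩ := Finset.exists_lt_of_sum_lt (f := fun _ => 0) (by simpa using hpos)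
    set c' : Y → ℕ := fun y => c y - (if y = y0 then 1 else 0) with hc'
    have hce : ∀ y, c' y + (if y = y0 then 1 else 0) = c y := by
      intro y
      by_cases hy : y = y0
      · simp [hc', hy]; omega
      · simp [hc', hy]
    have hsum : ∑ y, c' y + 1 = ∑ y, c y := by
      have : ∑ y, (c' y + (if y = y0 then 1 else 0)) = ∑ y, c y :=
        Finset.sum_congr rfl fun y _ => hce y
      rw [Finset.sum_add_distrib] at this
      simpa using this
    obtain ⟨d', hd'le, hd'sum⟩ := ih c' (by omega)
    refine ⟨fun y => d' y + (if y = y0 then 1 else 0), fun y => ?_, ?_⟩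
    · show d' y + (if y = y0 then 1 else 0) ≤ c y
      have h1 := hd'le y; have h2 := hce y; simp only [hc'] at h1; omega
    · rw [Finset.sum_add_distrib, hd'sum]
      simp

-- Lemma 2: matrix with all row sums k and given column sums c
lemma margin_matrix {Y : Type*} [Fintype Y] (k R : ℕ) (c : Y → ℕ)
    (h : ∑ y, c y = R * k) :
    ∃ D : Fin R → Y → ℕ, (∀ r, ∑ y, D r y = k) ∧ (∀ y, ∑ r, D r y = c y) := by
  induction R generalizing c with
  | zero =>
    refine ⟨Fin.elim0, fun r => r.elim0, fun y => ?_⟩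
    have : c y = 0 := by
      have := Finset.sum_eq_zero_iff.mp (by simpa only [zero_mul] using h) y (Finset.mem_univ y)
      exact this
    simp [this]
  | succ R ih =>
    obtain ⟨d, hdle, hdsum⟩ := sub_row k c (by rw [h]; nlinarith)
    set c' : Y → ℕ := fun y => c y - d y with hc'
    have hsum' : ∑ y, c' y = R * k := by
      have : ∑ y, (c' y + d y) = ∑ y, c y :=
        Finset.sum_congr rfl fun y _ => by have := hdle y; simp [hc']; omega
      rw [Finset.sum_add_distrib, hdsum, h, Nat.succ_mul] at this
      omega
    obtain ⟨D', hD'row, hD'col⟩ := ih c' hsum'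
    refine ⟨Fin.cases d D', fun r => ?_, fun y => ?_⟩
    · refine Fin.cases ?_ ?_ r
      · simpa using hdsum
      · intro i; simpa using hD'row i
    · rw [Fin.sum_univ_succ]
      simp only [Fin.cases_zero, Fin.cases_succ]
      rw [hD'col y]
      have := hdle y; simp [hc']; omega

-- Lemma 3: a doubly k-regular nonneg integer matrix has a "permutation" inside it
lemma hall_step {X Y : Type*} [Fintype X] [Fintype Y] [DecidableEq Y]
    (M : X → Y → ℕ) (k : ℕ) (hk : 0 < k)
    (hrow : ∀ x, ∑ y, M x y = k) (hcol : ∀ y, ∑ x, M x y = k) :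
    ∃ σ : X → Y, Function.Bijective σ ∧ ∀ x, 0 < M x (σ x) := by
  set t : X → Finset Y := fun x => Finset.univ.filter (fun y => 0 < M x y) with ht
  have hall : ∀ s : Finset X, s.card ≤ (s.biUnion t).card := by
    intro s
    have key : k * s.card ≤ k * (s.biUnion t).card := by
      calc k * s.card = ∑ x ∈ s, k := by rw [Finset.sum_const, smul_eq_mul, mul_comm]
      _ = ∑ x ∈ s, ∑ y ∈ s.biUnion t, M x y := by
          refine Finset.sum_congr rfl fun x hx => ?_
          rw [← hrow x]
          refine (Finset.sum_subset (Finset.subset_univ _) fun y _ hy => ?_).symm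
          by_contra hne
          exact hy (Finset.mem_biUnion.mpr ⟨x, hx, by simp [ht, Nat.pos_of_ne_zero hne]⟩)
      _ = ∑ y ∈ s.biUnion t, ∑ x ∈ s, M x y := Finset.sum_comm
      _ ≤ ∑ y ∈ s.biUnion t, ∑ x, M x y := by
          refine Finset.sum_le_sum fun y _ => ?_
          exact Finset.sum_le_sum_of_subset (Finset.subset_univ s)
      _ = ∑ y ∈ s.biUnion t, k := Finset.sum_congr rfl fun y _ => hcol y
      _ = k * (s.biUnion t).card := by rw [Finset.sum_const, smul_eq_mul, mul_comm]
    exact Nat.le_of_mul_le_mul_left key hk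
  obtain ⟨σ, hinj, hmem⟩ := (Finset.all_card_le_biUnion_card_iff_exists_injective t).mp hall
  have hcard : Fintype.card X = Fintype.card Y := by
    have : k * Fintype.card X = k * Fintype.card Y := by
      calc k * Fintype.card X = ∑ x : X, k := by rw [Finset.sum_const, smul_eq_mul, mul_comm, Finset.card_univ]
      _ = ∑ x : X, ∑ y : Y, M x y := Finset.sum_congr rfl fun x _ => (hrow x).symm
      _ = ∑ y : Y, ∑ x : X, M x y := Finset.sum_comm
      _ = ∑ y : Y, k := Finset.sum_congr rfl fun y _ => hcol y
      _ = k * Fintype.card Y := by rw [Finset.sum_const, smul_eq_mul, mul_comm, Finset.card_univ]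
    exact Nat.eq_of_mul_eq_mul_left hk this
  refine ⟨σ, (Fintype.bijective_iff_injective_and_card σ).mpr ⟨hinj, hcard⟩, fun x => ?_⟩
  have := hmem x
  simp [ht] at this
  exact this

-- Lemma 4: decomposition into k partial permutation matrices
lemma decompose {X Y : Type*} [Fintype X] [Fintype Y] [DecidableEq X] [DecidableEq Y]
    (k : ℕ) (M : X → Y → ℕ)
    (hrow : ∀ x, ∑ y, M x y = k) (hcol : ∀ y, ∑ x, M x y = k) :
    ∃ g : Fin k → X → Y, (∀ i, Function.Injective (g i)) ∧
      ∀ x y, ((Finset.univ : Finset (Fin k)).filter (fun i => g i x = y)).card ≤ M x y := by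
  induction k generalizing M with
  | zero => exact ⟨Fin.elim0, fun i => i.elim0, fun x y => by simp⟩
  | succ k ih =>
    obtain ⟨σ, hbij, hpos⟩ := hall_step M (k+1) (Nat.succ_pos k) hrow hcol
    set M' : X → Y → ℕ := fun x y => M x y - (if σ x = y then 1 else 0) with hM'
    have hMe : ∀ x y, M' x y + (if σ x = y then 1 else 0) = M x y := by
      intro x y
      by_cases h : σ x = y
      · have := hpos x; rw [h] at this; simp [hM', h]; omega
      · simp [hM', h]
    have hrow' : ∀ x, ∑ y, M' x y = k := by
      intro x
      have h1 : ∑ y, (M' x y + (if σ x = y then 1 else 0)) = ∑ y, M x y :=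
        Finset.sum_congr rfl fun y _ => hMe x y
      rw [Finset.sum_add_distrib, Finset.sum_ite_eq Finset.univ (σ x) (fun _ => 1)] at h1
      simp [hrow x] at h1
      omega
    have hcol' : ∀ y, ∑ x, M' x y = k := by
      intro y
      have h1 : ∑ x, (M' x y + (if σ x = y then 1 else 0)) = ∑ x, M x y :=
        Finset.sum_congr rfl fun x _ => hMe x y
      have h2 : ∑ x, (if σ x = y then 1 else 0) = 1 := by
        rw [Fintype.sum_bijective σ hbij _ (fun y' => if y' = y then (1:ℕ) else 0) (fun x => rfl)]
        rw [Finset.sum_ite_eq' Finset.univ y (fun _ => 1)]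
        simp
      rw [Finset.sum_add_distrib, h2, hcol y] at h1
      omega
    obtain ⟨g', hginj, hgmul⟩ := ih M' hrow' hcol'
    refine ⟨Fin.cases σ g', fun i => ?_, fun x y => ?_⟩
    · refine Fin.cases ?_ ?_ i
      · simpa using hbij.injective
      · intro j; simpa using hginj j
    · rw [Fin.card_filter_univ_succ']
      simp only [Fin.cases_zero, Fin.cases_succ]
      have := hgmul x y
      have h2 := hMe x y
      have key : (if σ x = y then 1 else 0) + #{i | g' i x = y} ≤ M x y := by omega
      exact key

theorem stmt5 {V : Type*} [Fintype V] [DecidableEq V]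
    (G : SimpleGraph V) [DecidableRel G.Adj]
    (A : Finset V) (hA : 2 * A.card ≤ G.minDegree) :
    ∃ g : Fin (G.minDegree - A.sup fun a => (A.filter (G.Adj a)).card) → V → V,
      (∀ i, ∀ a ∈ A, G.Adj a (g i a) ∧ g i a ∉ A) ∧
      (∀ i, Set.InjOn (g i) ↑A) ∧
      (∀ i j, i ≠ j → ∀ a ∈ A, g i a ≠ g j a) := by
  by_cases hAe : A = ∅
  · refine ⟨fun _ => id, ?_, ?_, ?_⟩
    · simp [hAe]
    · intro i; exact Function.injective_id.injOn
    · simp [hAe]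
  -- setup
  set k := G.minDegree - A.sup fun a => (A.filter (G.Adj a)).card with hk
  set n := A.card with hn
  have hn1 : 1 ≤ n := Finset.card_pos.mpr (Finset.nonempty_iff_ne_empty.mpr hAe)
  -- the max degree inside A is at most n - 1
  have hDelta : (A.sup fun a => (A.filter (G.Adj a)).card) ≤ n - 1 := by
    refine Finset.sup_le fun a ha => ?_
    have hsub : A.filter (G.Adj a) ⊆ A.erase a := by
      intro b hb
      rw [Finset.mem_filter] at hb
      exact Finset.mem_erase.mpr ⟨fun h => G.irrefl (h ▸ hb.2), hb.1⟩
    calc (A.filter (G.Adj a)).card ≤ (A.erase a).card := Finset.card_le_card hsub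
    _ = n - 1 := by rw [Finset.card_erase_of_mem ha]
  have hkn : n + 1 ≤ k := by omega
  -- each a ∈ A has at least k neighbors outside A
  have hbig : ∀ a ∈ A, k ≤ ((G.neighborFinset a) \ A).card := by
    intro a ha
    have h1 := G.minDegree_le_degree a
    have h2 := Finset.card_sdiff_add_card_inter (G.neighborFinset a) A
    have h3 : G.neighborFinset a ∩ A = A.filter (G.Adj a) := by
      ext b; simp [Finset.mem_filter, SimpleGraph.mem_neighborFinset, and_comm]
    have h4 : (A.filter (G.Adj a)).card ≤ A.sup fun a => (A.filter (G.Adj a)).card :=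
      Finset.le_sup (f := fun a => (A.filter (G.Adj a)).card) ha
    rw [h3] at h2
    have h5 : (G.neighborFinset a).card = G.degree a := rfl
    omega
  -- choose subsets F a of neighbors outside A of size exactly k
  have hF : ∀ a : V, ∃ s : Finset V, a ∈ A → s ⊆ (G.neighborFinset a) \ A ∧ s.card = k := by
    intro a
    by_cases ha : a ∈ A
    · obtain ⟨t, ht, htc⟩ := Finset.exists_subset_card_eq (hbig a ha)
      exact ⟨t, fun _ => ⟨ht, htc⟩⟩
    · exact ⟨∅, fun h => absurd h ha⟩
  choose F hFspec using hF
  have hFsub : ∀ a ∈ A, F a ⊆ (G.neighborFinset a) \ A := fun a ha => (hFspec a ha).1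
  have hFcard : ∀ a ∈ A, (F a).card = k := fun a ha => (hFspec a ha).2
  set B' := A.biUnion F with hB'
  set d : V → ℕ := fun b => (A.filter (fun a => b ∈ F a)).card with hd
  have hd_le_n : ∀ b, d b ≤ n := fun b => Finset.card_filter_le A _
  have hdsum : ∑ b ∈ B', d b = n * k := by
    calc ∑ b ∈ B', d b = ∑ b ∈ B', ∑ a ∈ A, (if b ∈ F a then 1 else 0) := by
          refine Finset.sum_congr rfl fun b _ => ?_
          rw [hd]; exact Finset.card_filter _ _
    _ = ∑ a ∈ A, ∑ b ∈ B', (if b ∈ F a then 1 else 0) := Finset.sum_comm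
    _ = ∑ a ∈ A, (B'.filter (fun b => b ∈ F a)).card := by
          refine Finset.sum_congr rfl fun a _ => (Finset.card_filter _ _).symm
    _ = ∑ a ∈ A, (F a).card := by
          refine Finset.sum_congr rfl fun a ha => ?_
          congr 1
          rw [Finset.filter_mem_eq_inter, Finset.inter_eq_right.mpr]
          exact Finset.subset_biUnion_of_mem F ha
    _ = ∑ a ∈ A, k := Finset.sum_congr rfl fun a ha => hFcard a ha
    _ = n * k := by rw [Finset.sum_const, smul_eq_mul]
  set m := B'.card with hm
  have hmk : k ≤ m := by
    have : n * k ≤ m * n := by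
      rw [← hdsum]
      calc ∑ b ∈ B', d b ≤ ∑ b ∈ B', n := Finset.sum_le_sum fun b _ => hd_le_n b
      _ = m * n := by rw [Finset.sum_const, smul_eq_mul]
    have h2 : k * n ≤ m * n := by rwa [mul_comm k n]
    exact Nat.le_of_mul_le_mul_right h2 (by omega)
  set R := m - n with hR
  set c : ↥B' → ℕ := fun b => k - d ↑b with hc
  have hcsum : ∑ b : ↥B', c b = R * k := by
    rw [hc]
    rw [Finset.sum_coe_sort B' (fun b => k - d b)]
    have h1 : ∑ b ∈ B', ((k - d b) + d b) = m * k := by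
      rw [Finset.sum_congr rfl (fun b _ => by have := hd_le_n b; omega : ∀ b ∈ B', (k - d b) + d b = k)]
      rw [Finset.sum_const, smul_eq_mul]
    rw [Finset.sum_add_distrib, hdsum] at h1
    have h2 : R * k = m * k - n * k := by rw [hR, Nat.sub_mul]
    omega
  obtain ⟨D, hDrow, hDcol⟩ := margin_matrix k R c hcsum
  -- assemble the doubly regular matrix
  set M : (↥A ⊕ Fin R) → ↥B' → ℕ :=
    fun x b => Sum.casesOn x (fun a => if ↑b ∈ F ↑a then 1 else 0) (fun r => D r b) with hM
  have hrow : ∀ x, ∑ b : ↥B', M x b = k := by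
    rintro (a | r)
    · calc ∑ b : ↥B', (if (↑b : V) ∈ F ↑a then 1 else 0)
          = ∑ b ∈ B', (if b ∈ F ↑a then 1 else 0) :=
            Finset.sum_coe_sort B' (fun b => if b ∈ F ↑a then 1 else 0)
      _ = (B'.filter (fun b => b ∈ F ↑a)).card := (Finset.card_filter _ _).symm
      _ = (F ↑a).card := by
            congr 1
            rw [Finset.filter_mem_eq_inter, Finset.inter_eq_right.mpr]
            exact Finset.subset_biUnion_of_mem F a.2
      _ = k := hFcard ↑a a.2
    · exact hDrow r
  have hcol : ∀ b : ↥B', ∑ x : ↥A ⊕ Fin R, M x b = k := by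
    intro b
    rw [Fintype.sum_sum_type]
    have h1 : ∑ a : ↥A, (if (↑b : V) ∈ F ↑a then 1 else 0) = d ↑b := by
      rw [Finset.sum_coe_sort A (fun a => if (↑b : V) ∈ F a then 1 else 0)]
      exact (Finset.card_filter _ _).symm
    have h2 : ∑ r : Fin R, D r b = c b := hDcol b
    rw [hM]
    simp only []
    have h3 : c b = k - d ↑b := rfl
    rw [h1, h2, h3]
    have := hd_le_n (↑b)
    omega
  obtain ⟨g', hginj, hgmul⟩ := decompose k M hrow hcol
  have hgpos : ∀ (i : Fin k) (x : ↥A ⊕ Fin R), 0 < M x (g' i x) := by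
    intro i x
    have h1 : 0 < ((Finset.univ : Finset (Fin k)).filter (fun j => g' j x = g' i x)).card :=
      Finset.card_pos.mpr ⟨i, Finset.mem_filter.mpr ⟨Finset.mem_univ i, rfl⟩⟩
    exact lt_of_lt_of_le h1 (hgmul x (g' i x))
  have hmemF : ∀ (i : Fin k) (a : ↥A), (↑(g' i (Sum.inl a)) : V) ∈ F ↑a := by
    intro i a
    have := hgpos i (Sum.inl a)
    simp only [hM] at this
    by_contra hcon
    simp [hcon] at this
  refine ⟨fun i v => if h : v ∈ A then ↑(g' i (Sum.inl ⟨v, h⟩)) else v, ?_, ?_, ?_⟩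
  · intro i a ha
    simp only [dif_pos ha]
    have h1 := hFsub a ha (hmemF i ⟨a, ha⟩)
    rw [Finset.mem_sdiff, SimpleGraph.mem_neighborFinset] at h1
    exact h1
  · intro i a ha b hb heq
    rw [Finset.mem_coe] at ha hb
    simp only [dif_pos ha, dif_pos hb] at heq
    have h1 : g' i (Sum.inl ⟨a, ha⟩) = g' i (Sum.inl ⟨b, hb⟩) := Subtype.coe_injective heq
    have h2 := hginj i h1
    simpa using h2
  · intro i j hij a ha heq
    simp only [dif_pos ha] at heq
    have h1 : g' i (Sum.inl ⟨a, ha⟩) = g' j (Sum.inl ⟨a, ha⟩) := Subtype.coe_injective heq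
    set x : ↥A ⊕ Fin R := Sum.inl ⟨a, ha⟩ with hx
    set y := g' i x with hy
    have hMle : M x y ≤ 1 := by
      rw [hM, hx]
      simp only []
      split <;> omega
    have hcard := hgmul x y
    have hi : i ∈ (Finset.univ : Finset (Fin k)).filter (fun j => g' j x = y) :=
      Finset.mem_filter.mpr ⟨Finset.mem_univ i, rfl⟩
    have hj : j ∈ (Finset.univ : Finset (Fin k)).filter (fun j' => g' j' x = y) :=
      Finset.mem_filter.mpr ⟨Finset.mem_univ j, h1.symm⟩
    exact hij (Finset.card_le_one.mp (by omega) i hi j hj)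
end

section
/- Let G = (A ∪ B, E) be a bipartite graph and k a positive integer. If for every subset S ⊆ A and every v ∈ B we have |N(v) ∩ S| ≤ k, and ∑_{v∈B} |N(v) ∩ S| ≥ k|S| for all S ⊆ A, then G contains k pairwise edge-disjoint matchings each of size |A|. -/
open Finset

private lemma decomp_ds {X Y : Type*} [Fintype X] [Fintype Y] [DecidableEq X] [DecidableEq Y] :
    ∀ (k : ℕ) (w : X → Y → ℕ), (∀ x, ∑ y, w x y = k) → (∀ y, ∑ x, w x y = k) →
      ∃ f : Fin k → X → Y, (∀ i, Function.Injective (f i)) ∧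
        ∀ x y, (univ.filter fun i => f i x = y).card ≤ w x y := by
  intro k
  induction k with
  | zero =>
    intro w _ _
    exact ⟨fun i => i.elim0, fun i => i.elim0, fun x y => by simp⟩
  | succ k ih =>
    intro w hrow hcol
    have hall : ∀ s : Finset X,
        s.card ≤ (s.biUnion fun x => univ.filter fun y => 0 < w x y).card := by
      intro s
      set T := s.biUnion fun x => univ.filter fun y => 0 < w x y with hT
      have h1 : ∑ x ∈ s, ∑ y, w x y = s.card * (k+1) := by
        rw [Finset.sum_congr rfl fun x _ => hrow x, Finset.sum_const, smul_eq_mul]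
      have h2 : ∀ x ∈ s, ∑ y, w x y = ∑ y ∈ T, w x y := by
        intro x hx
        refine (Finset.sum_subset (Finset.subset_univ T) ?_).symm
        intro y _ hy
        by_contra h
        exact hy (Finset.mem_biUnion.mpr ⟨x, hx,
          Finset.mem_filter.mpr ⟨Finset.mem_univ y, Nat.pos_of_ne_zero h⟩⟩)
      have h4 : ∑ y ∈ T, ∑ x ∈ s, w x y ≤ T.card * (k+1) := by
        calc ∑ y ∈ T, ∑ x ∈ s, w x y ≤ ∑ y ∈ T, ∑ x, w x y :=
              Finset.sum_le_sum fun y _ => Finset.sum_le_sum_of_subset (Finset.subset_univ s)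
          _ = T.card * (k+1) := by
              rw [Finset.sum_congr rfl fun y _ => hcol y, Finset.sum_const, smul_eq_mul]
      have h5 : s.card * (k+1) ≤ T.card * (k+1) := by
        calc s.card * (k+1) = ∑ x ∈ s, ∑ y, w x y := h1.symm
          _ = ∑ x ∈ s, ∑ y ∈ T, w x y := Finset.sum_congr rfl h2
          _ = ∑ y ∈ T, ∑ x ∈ s, w x y := Finset.sum_comm
          _ ≤ T.card * (k+1) := h4
      exact Nat.le_of_mul_le_mul_right h5 (Nat.succ_pos k)
    obtain ⟨f₀, hinj, hmem⟩ := (Finset.all_card_le_biUnion_card_iff_exists_injective _).mp hall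
    have hmem' : ∀ x, 0 < w x (f₀ x) := fun x => (Finset.mem_filter.mp (hmem x)).2
    have hXY : Fintype.card X = Fintype.card Y := by
      have h6 : Fintype.card X * (k+1) = Fintype.card Y * (k+1) := by
        calc Fintype.card X * (k+1) = ∑ x : X, ∑ y, w x y := by
              rw [Finset.sum_congr rfl fun x _ => hrow x, Finset.sum_const, smul_eq_mul,
                Finset.card_univ]
          _ = ∑ y : Y, ∑ x, w x y := Finset.sum_comm
          _ = Fintype.card Y * (k+1) := by
              rw [Finset.sum_congr rfl fun y _ => hcol y, Finset.sum_const, smul_eq_mul,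
                Finset.card_univ]
      exact Nat.eq_of_mul_eq_mul_right (Nat.succ_pos k) h6
    have hsurj : Function.Surjective f₀ :=
      ((Fintype.bijective_iff_injective_and_card f₀).mpr ⟨hinj, hXY⟩).surjective
    have hcard1 : ∀ y, (univ.filter fun x => f₀ x = y).card = 1 := by
      intro y
      obtain ⟨x₀, hx₀⟩ := hsurj y
      rw [Finset.card_eq_one]
      refine ⟨x₀, ?_⟩
      ext x
      simp only [Finset.mem_filter, Finset.mem_univ, true_and, Finset.mem_singleton, ← hx₀]
      exact hinj.eq_iff
    have hpt : ∀ x y, (if f₀ x = y then 1 else 0) ≤ w x y := by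
      intro x y
      split
      · next h => rw [← h]; exact hmem' x
      · exact Nat.zero_le _
    set w' : X → Y → ℕ := fun x y => w x y - if f₀ x = y then 1 else 0 with hw'
    have hrow' : ∀ x, ∑ y, w' x y = k := by
      intro x
      have hs : ∑ y, w' x y + ∑ y, (if f₀ x = y then 1 else 0) = ∑ y, w x y := by
        rw [← Finset.sum_add_distrib]
        exact Finset.sum_congr rfl fun y _ => Nat.sub_add_cancel (hpt x y)
      have h7 : ∑ y, (if f₀ x = y then 1 else 0) = 1 := by simp
      have := hrow x
      omega
    have hcol' : ∀ y, ∑ x, w' x y = k := by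
      intro y
      have hs : ∑ x, w' x y + ∑ x, (if f₀ x = y then 1 else 0) = ∑ x, w x y := by
        rw [← Finset.sum_add_distrib]
        exact Finset.sum_congr rfl fun x _ => Nat.sub_add_cancel (hpt x y)
      have h7 : ∑ x, (if f₀ x = y then 1 else 0) = 1 := by
        rw [← Finset.card_filter]; exact hcard1 y
      have := hcol y
      omega
    obtain ⟨f', hinj', hle'⟩ := ih w' hrow' hcol'
    refine ⟨Fin.cons (α := fun _ => X → Y) f₀ f', ?_, ?_⟩
    · intro i
      induction i using Fin.cases with
      | zero => simpa using hinj
      | succ j => simpa using hinj' j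
    · intro x y
      have hsplit : (univ.filter fun i : Fin (k+1) => Fin.cons (α := fun _ => X → Y) f₀ f' i x = y).card
          = (if f₀ x = y then 1 else 0) + (univ.filter fun i : Fin k => f' i x = y).card := by
        rw [Finset.card_filter, Finset.card_filter, Fin.sum_univ_succ]
        simp
      have h3 := hle' x y
      simp only [hw'] at h3
      have h4 := hpt x y
      rw [hsplit]
      omega

theorem stmt6 {α β : Type*} [Fintype α] [Fintype β] [DecidableEq α]
    (r : α → β → Prop) [∀ a b, Decidable (r a b)] (k : ℕ) (hk : 0 < k)
    (h1 : ∀ (S : Finset α) (b : β), (S.filter fun a => r a b).card ≤ k)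
    (h2 : ∀ S : Finset α, k * S.card ≤ ∑ b : β, (S.filter fun a => r a b).card) :
    ∃ g : Fin k → α → β,
      (∀ i a, r a (g i a)) ∧
      (∀ i, Function.Injective (g i)) ∧
      (∀ i j, i ≠ j → ∀ a, g i a ≠ g j a) := by
  classical
  have hdegA : ∀ a, k ≤ (univ.filter fun b => r a b).card := by
    intro a
    have h := h2 {a}
    simp only [Finset.card_singleton, mul_one] at h
    calc k ≤ ∑ b : β, (({a} : Finset α).filter fun a' => r a' b).card := h
      _ = (univ.filter fun b => r a b).card := by
          rw [Finset.card_filter]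
          refine Finset.sum_congr rfl fun b _ => ?_
          rw [Finset.filter_singleton]
          split <;> simp [*]
  have hF : ∀ a, ∃ s : Finset β, s ⊆ univ.filter (fun b => r a b) ∧ s.card = k :=
    fun a => Finset.exists_subset_card_eq (hdegA a)
  choose F hFsub hFcard using hF
  have hrF : ∀ a b, b ∈ F a → r a b := fun a b h => (Finset.mem_filter.mp (hFsub a h)).2
  set deg : β → ℕ := fun b => (univ.filter fun a => b ∈ F a).card with hdegdef
  have hdeg : ∀ b, deg b ≤ k := by
    intro b
    refine le_trans (Finset.card_le_card ?_) (h1 univ b)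
    intro a ha
    simp only [Finset.mem_filter, Finset.mem_univ, true_and] at ha ⊢
    exact hrF a b ha
  have hsum_memβ : ∀ (s : Finset β), (∑ b, if b ∈ s then (1:ℕ) else 0) = s.card := by
    intro s; simp [Finset.sum_ite_mem]
  have hsum_degA : ∀ a, (∑ b, if b ∈ F a then (1:ℕ) else 0) = k := by
    intro a; rw [hsum_memβ, hFcard]
  have hsum_degB : ∀ b, (∑ a, if b ∈ F a then (1:ℕ) else 0) = deg b := by
    intro b; simp only [hdegdef]; exact (Finset.card_filter _ _).symm
  set w : α ⊕ β → β ⊕ α → ℕ := fun x y =>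
    Sum.elim
      (fun a => Sum.elim (fun b => if b ∈ F a then 1 else 0) (fun _ => 0) y)
      (fun b => Sum.elim (fun b' => if b' = b then k - deg b else 0)
        (fun a' => if b ∈ F a' then 1 else 0) y) x
    with hwdef
  have hrow : ∀ x, ∑ y, w x y = k := by
    intro x
    rw [Fintype.sum_sum_type]
    cases x with
    | inl a =>
      simp only [hwdef, Sum.elim_inl, Sum.elim_inr]
      rw [hsum_degA a]
      simp
    | inr b =>
      simp only [hwdef, Sum.elim_inl, Sum.elim_inr]
      rw [hsum_degB b, Finset.sum_ite_eq' univ b (fun _ => k - deg b)]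
      simp only [Finset.mem_univ, if_true]
      have := hdeg b
      omega
  have hcol : ∀ y, ∑ x, w x y = k := by
    intro y
    rw [Fintype.sum_sum_type]
    cases y with
    | inl b =>
      simp only [hwdef, Sum.elim_inl, Sum.elim_inr]
      rw [hsum_degB b, Finset.sum_ite_eq univ b (fun b' => k - deg b')]
      simp only [Finset.mem_univ, if_true]
      have := hdeg b
      omega
    | inr a =>
      simp only [hwdef, Sum.elim_inl, Sum.elim_inr]
      rw [hsum_degA a]
      simp
  obtain ⟨f, hfinj, hfle⟩ := decomp_ds k w hrow hcol
  have hb₀ : ∀ a, ∃ b, b ∈ F a := by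
    intro a
    have : 0 < (F a).card := by rw [hFcard]; exact hk
    exact Finset.card_pos.mp this
  choose b₀ hb₀ using hb₀
  have hkey : ∀ i a, ∃ b, f i (Sum.inl a) = Sum.inl b ∧ b ∈ F a := by
    intro i a
    have h5 : 0 < w (Sum.inl a) (f i (Sum.inl a)) := by
      have hle := hfle (Sum.inl a) (f i (Sum.inl a))
      have hpos : 0 < (univ.filter fun j => f j (Sum.inl a) = f i (Sum.inl a)).card :=
        Finset.card_pos.mpr ⟨i, by simp⟩
      omega
    cases hy : f i (Sum.inl a) with
    | inl b =>
      refine ⟨b, rfl, ?_⟩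
      rw [hy] at h5
      simp only [hwdef, Sum.elim_inl] at h5
      by_contra h
      simp [h] at h5
    | inr a' =>
      rw [hy] at h5
      simp [hwdef] at h5
  set g : Fin k → α → β := fun i a => Sum.elim id (fun _ => b₀ a) (f i (Sum.inl a)) with hgdef
  have hg : ∀ i a, f i (Sum.inl a) = Sum.inl (g i a) ∧ g i a ∈ F a := by
    intro i a
    obtain ⟨b, hb, hbm⟩ := hkey i a
    have : g i a = b := by rw [hgdef]; simp [hb]
    rw [this]
    exact ⟨hb, hbm⟩
  refine ⟨g, ?_, ?_, ?_⟩
  · intro i a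
    exact hrF a _ (hg i a).2
  · intro i a a' h
    have h1' := (hg i a).1
    have h2' := (hg i a').1
    rw [h] at h1'
    have := hfinj i (h1'.trans h2'.symm)
    exact Sum.inl_injective this
  · intro i j hij a h
    have h1' := (hg i a).1
    have h2' := (hg j a).1
    rw [h] at h1'
    have hsub : ({i, j} : Finset (Fin k)) ⊆ univ.filter fun l => f l (Sum.inl a) = Sum.inl (g j a) := by
      intro l hl
      simp only [Finset.mem_insert, Finset.mem_singleton] at hl
      rcases hl with rfl | rfl
      · simp [h1']
      · simp [h2']
    have hcard2 : 2 ≤ (univ.filter fun l => f l (Sum.inl a) = Sum.inl (g j a)).card := by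
      calc 2 = ({i, j} : Finset (Fin k)).card := by rw [Finset.card_insert_of_notMem (by simp [hij]), Finset.card_singleton]
        _ ≤ _ := Finset.card_le_card hsub
    have hle := hfle (Sum.inl a) (Sum.inl (g j a))
    have : w (Sum.inl a) (Sum.inl (g j a)) ≤ 1 := by
      simp only [hwdef, Sum.elim_inl]
      split <;> omega
    omega
end

section
/- For n ≥ 8 and d ≥ ⌈n/2⌉ + 2, every d-regular graph on n vertices has the MMS property. -/
open Finset
open scoped Classical

section Aux

variable {V : Type*} [Fintype V] [DecidableEq V]
  (G : SimpleGraph V) [DecidableRel G.Adj]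

/-- The set of "good" (nonnegative) edges. -/
noncomputable def goodE (f : V → ℝ) : Finset (Sym2 V) :=
  G.edgeFinset.filter fun e =>
    0 ≤ Sym2.lift ⟨fun u v => f u + f v, fun _ _ => by ring⟩ e

lemma mem_goodE {f : V → ℝ} {a b : V} (hadj : G.Adj a b)
    (hab : 0 ≤ f a + f b) : s(a, b) ∈ goodE G f := by
  simp only [goodE, mem_filter, SimpleGraph.mem_edgeFinset,
    SimpleGraph.mem_edgeSet, Sym2.lift_mk]
  exact ⟨hadj, hab⟩

lemma card_image_sym2 (a : V) (C : Finset V) :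
    (C.image fun b => s(a, b)).card = C.card :=
  Finset.card_image_of_injective _ fun b c h => Sym2.congr_right.mp h

/-- The main counting lemma: if `A ⊆ B` with `|A| = i`, `|B| = n + 1 - i`, and every
pair `(a, b) ∈ A × B` is good, then there are at least `d` good edges. -/
lemma key (f : V → ℝ) (n d i : ℕ) (hcard : Fintype.card V = n)
    (hreg : G.IsRegularOfDegree d) (A B : Finset V) (hAB : A ⊆ B)
    (hA : A.card = i) (hB : B.card + i = n + 1) (hi : 1 ≤ i)
    (hid : i + 2 ≤ d) (hd6 : 6 ≤ d)
    (good : ∀ a ∈ A, ∀ b ∈ B, 0 ≤ f a + f b) :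
    d ≤ (goodE G f).card := by
  have hBn : B.card ≤ n := hcard ▸ B.card_le_univ
  -- every vertex of A has many neighbours inside B
  have h1 : ∀ a ∈ A, d + 1 ≤ (B ∩ G.neighborFinset a).card + i := by
    intro a _
    have hdeg : (G.neighborFinset a).card = d := hreg a
    have h2 : ((G.neighborFinset a) \ B).card ≤ (univ \ B).card :=
      card_le_card (sdiff_subset_sdiff (subset_univ _) le_rfl)
    have h3 : (univ \ B).card = n - B.card := by
      rw [card_sdiff_of_subset (subset_univ _), card_univ, hcard]
    have h4 : ((G.neighborFinset a) ∩ B).card + ((G.neighborFinset a) \ B).card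
        = d := by rw [card_inter_add_card_sdiff, hdeg]
    rw [inter_comm] at h4
    omega
  by_cases hi3 : 3 ≤ i
  · -- double counting case
    have hub : ∀ e ∈ goodE G f, ((A.filter fun a => a ∈ e)).card ≤ 2 := by
      intro e he
      have he' : e ∈ G.edgeFinset := mem_of_mem_filter e he
      induction e with
      | _ u v =>
        have hsub : (A.filter fun a => a ∈ s(u, v)) ⊆ {u, v} := by
          intro a ha
          have := (mem_filter.mp ha).2
          rw [Sym2.mem_iff] at this
          simp [this]
        calc ((A.filter fun a => a ∈ s(u, v))).card ≤ ({u, v} : Finset V).card :=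
              card_le_card hsub
          _ ≤ 2 := by
              apply le_trans (card_insert_le _ _); simp
    have hlb : ∀ a ∈ A, d + 1 - i ≤ ((goodE G f).bipartiteAbove (fun a e => a ∈ e) a).card := by
      intro a ha
      have hsub : ((B ∩ G.neighborFinset a).image fun b => s(a, b)) ⊆
          (goodE G f).bipartiteAbove (fun a e => a ∈ e) a := by
        intro e he
        obtain ⟨b, hb, rfl⟩ := mem_image.mp he
        rw [mem_inter, SimpleGraph.mem_neighborFinset] at hb
        rw [Finset.mem_bipartiteAbove]
        exact ⟨mem_goodE G hb.2 (good a ha b hb.1), Sym2.mem_mk_left a b⟩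
      have := card_le_card hsub
      rw [card_image_sym2] at this
      have := h1 a ha
      omega
    have hdc := Finset.card_mul_le_card_mul (fun a e => a ∈ e)
      (s := A) (t := goodE G f) (m := d + 1 - i) (n := 2)
      hlb (by intro e he; exact hub e he)
    rw [hA] at hdc
    -- arithmetic : 2 * d ≤ i * (d + 1 - i)
    have harith : 2 * d ≤ i * (d + 1 - i) := by
      have h5 : (i : ℤ) * (d + 1 - i) - 2 * d = (i - 3) * (d - i - 2) + (d - 6) := by ring
      have h6a : (0 : ℤ) ≤ (i : ℤ) - 3 := by omega
      have h6b : (0 : ℤ) ≤ (d : ℤ) - i - 2 := by omega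
      have h6 : (0 : ℤ) ≤ ((i : ℤ) - 3) * ((d : ℤ) - i - 2) := mul_nonneg h6a h6b
      have h7 : (2 * d : ℤ) ≤ (i : ℤ) * (d + 1 - i) := by omega
      have h8 : ((d + 1 - i : ℕ) : ℤ) = (d : ℤ) + 1 - i := by
        have : i ≤ d + 1 := by omega
        omega
      exact_mod_cast h8 ▸ h7
    have hfin := harith.trans hdc
    omega
  · -- i = 1 or i = 2
    have hi12 : i = 1 ∨ i = 2 := by omega
    rcases hi12 with rfl | rfl
    · -- i = 1
      obtain ⟨a, rfl⟩ := Finset.card_eq_one.mp hA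
      have hBuniv : B = univ := Finset.eq_univ_of_card B (by omega)
      have hsub : ((G.neighborFinset a).image fun b => s(a, b)) ⊆ goodE G f := by
        intro e he
        obtain ⟨b, hb, rfl⟩ := mem_image.mp he
        rw [SimpleGraph.mem_neighborFinset] at hb
        exact mem_goodE G hb (good a (mem_singleton_self a) b (hBuniv ▸ mem_univ b))
      have := card_le_card hsub
      rw [card_image_sym2] at this
      have hdeg : (G.neighborFinset a).card = d := hreg a
      omega
    · -- i = 2
      obtain ⟨a₁, a₂, hne, rfl⟩ := Finset.card_eq_two.mp hA
      have ha₁ : a₁ ∈ ({a₁, a₂} : Finset V) := by simp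
      have ha₂ : a₂ ∈ ({a₁, a₂} : Finset V) := by simp
      set T₁ := ((B ∩ G.neighborFinset a₁).image fun b => s(a₁, b)) with hT₁
      set T₂ := (((B ∩ G.neighborFinset a₂) \ {a₁}).image fun b => s(a₂, b)) with hT₂
      have hsub : T₁ ∪ T₂ ⊆ goodE G f := by
        intro e he
        rcases mem_union.mp he with he | he
        · obtain ⟨b, hb, rfl⟩ := mem_image.mp he
          rw [mem_inter, SimpleGraph.mem_neighborFinset] at hb
          exact mem_goodE G hb.2 (good a₁ ha₁ b hb.1)
        · obtain ⟨b, hb, rfl⟩ := mem_image.mp he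
          rw [mem_sdiff, mem_inter, SimpleGraph.mem_neighborFinset] at hb
          exact mem_goodE G hb.1.2 (good a₂ ha₂ b hb.1.1)
      have hdisj : Disjoint T₁ T₂ := by
        rw [Finset.disjoint_left]
        intro e he1 he2
        obtain ⟨b, hb, rfl⟩ := mem_image.mp he1
        obtain ⟨c, hc, hec⟩ := mem_image.mp he2
        rw [mem_sdiff, mem_singleton] at hc
        have hm : a₁ ∈ s(a₂, c) := by rw [hec]; exact Sym2.mem_mk_left a₁ b
        rw [Sym2.mem_iff] at hm
        rcases hm with h | h
        · exact hne h
        · exact hc.2 h.symm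
      have hc1 : T₁.card = (B ∩ G.neighborFinset a₁).card := card_image_sym2 _ _
      have hc2 : T₂.card = ((B ∩ G.neighborFinset a₂) \ {a₁}).card := card_image_sym2 _ _
      have hs2 : (B ∩ G.neighborFinset a₂).card - ({a₁} : Finset V).card ≤
          ((B ∩ G.neighborFinset a₂) \ {a₁}).card := Finset.le_card_sdiff _ _
      rw [card_singleton] at hs2
      have hu : (T₁ ∪ T₂).card = T₁.card + T₂.card := card_union_of_disjoint hdisj
      have hle : (T₁ ∪ T₂).card ≤ (goodE G f).card := card_le_card hsub
      have hb1 := h1 a₁ ha₁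
      have hb2 := h1 a₂ ha₂
      omega

end Aux

theorem stmt7 {V : Type*} [Fintype V] [DecidableEq V]
    (G : SimpleGraph V) [DecidableRel G.Adj] (n d : ℕ)
    (hcard : Fintype.card V = n) (hn : 8 ≤ n) (hd : (n + 1) / 2 + 2 ≤ d)
    (hreg : G.IsRegularOfDegree d) :
    G.HasMMS := by
  intro f hf
  have hnpos : 0 < n := by omega
  have hV : Nonempty V := by
    rw [← Fintype.card_pos_iff, hcard]; omega
  have hd6 : 6 ≤ d := by omega
  -- sort the vertices by `f`
  let ε : Fin n ≃ V := (Fintype.equivFinOfCardEq hcard).symm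
  let τ : Equiv.Perm (Fin n) := Tuple.sort (f ∘ ε)
  let φ : Fin n ≃ V := τ.trans ε
  have hmono : Monotone (fun j => f (φ j)) := Tuple.monotone_sort (f ∘ ε)
  set g : Fin n → ℝ := fun j => f (φ j) with hg
  have hsumg : ∑ j, g j = ∑ v, f v := Equiv.sum_comp φ f
  have hsumrev : ∑ j, g (Fin.rev j) = ∑ j, g j := Equiv.sum_comp Fin.revPerm g
  have hex : ∃ k : Fin n, 0 ≤ g k + g k.rev := by
    by_contra h
    push_neg at h
    have hne : (univ : Finset (Fin n)).Nonempty := ⟨⟨0, hnpos⟩, mem_univ _⟩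
    have hlt : ∑ j, (g j + g (Fin.rev j)) < ∑ _j : Fin n, (0 : ℝ) :=
      Finset.sum_lt_sum_of_nonempty hne (fun j _ => h j)
    rw [Finset.sum_const_zero, Finset.sum_add_distrib, hsumrev, hsumg] at hlt
    linarith
  obtain ⟨k0, hk0⟩ := hex
  obtain ⟨k, hkle, hk⟩ : ∃ k : Fin n, k ≤ k.rev ∧ 0 ≤ g k + g k.rev := by
    rcases le_total k0 k0.rev with h | h
    · exact ⟨k0, h, hk0⟩
    · refine ⟨k0.rev, ?_, ?_⟩
      · rw [Fin.rev_rev]; exact h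
      · rw [Fin.rev_rev]; linarith
  set i : ℕ := (k : ℕ) + 1 with hi
  set A : Finset V := (Finset.Ici k.rev).image φ with hA'
  set B : Finset V := (Finset.Ici k).image φ with hB'
  have hAB : A ⊆ B := image_subset_image (Finset.Ici_subset_Ici.mpr hkle)
  have hkv : (k.rev : ℕ) = n - ((k : ℕ) + 1) := Fin.val_rev k
  have hklt : (k : ℕ) < n := k.isLt
  have hA : A.card = i := by
    rw [hA', card_image_of_injective _ φ.injective, Fin.card_Ici, hkv]
    omega
  have hBc : B.card + i = n + 1 := by
    rw [hB', card_image_of_injective _ φ.injective, Fin.card_Ici]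
    omega
  have hkle' : (k : ℕ) ≤ n - ((k : ℕ) + 1) := by
    have := hkle
    rw [Fin.le_def, hkv] at this
    exact this
  have hii : i + 2 ≤ d := by omega
  have good : ∀ a ∈ A, ∀ b ∈ B, 0 ≤ f a + f b := by
    intro a ha b hb
    obtain ⟨j1, hj1, rfl⟩ := mem_image.mp ha
    obtain ⟨j2, hj2, rfl⟩ := mem_image.mp hb
    rw [Finset.mem_Ici] at hj1 hj2
    calc (0 : ℝ) ≤ g k + g k.rev := hk
      _ = g k.rev + g k := by ring
      _ ≤ g j1 + g j2 := add_le_add (hmono hj1) (hmono hj2)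
  have hkey := key G f n d i hcard hreg A B hAB hA hBc (by omega) hii hd6 good
  have hmin : G.minDegree ≤ d := by
    obtain ⟨v⟩ := hV
    have h := G.minDegree_le_degree v
    rwa [hreg v] at h
  exact le_trans hmin hkey
end

section
/- For every positive integer k, there exists a (2k+2)-regular graph on 4k+1 vertices that does not have the MMS property. Explicitly, take the cycle C_{2k+1}, a perfect matching F on a disjoint set of 2k vertices, and add all edges between the two vertex sets; the resulting graph is (2k+2)-regular and fails the MMS property. -/
open Finset
open scoped Classical

/-- cycle on 0..2k, matching on 2k+1..4k, complete bipartite between -/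
def mmsAdj (k : ℕ) (i j : Fin (4 * k + 1)) : Prop :=
  i ≠ j ∧
    ((i.val < 2*k+1 ∧ j.val < 2*k+1 ∧
        (j.val = i.val + 1 ∨ i.val = j.val + 1 ∨
          (i.val = 0 ∧ j.val = 2*k) ∨ (j.val = 0 ∧ i.val = 2*k))) ∨
      (2*k+1 ≤ i.val ∧ 2*k+1 ≤ j.val ∧ (i.val - (2*k+1))/2 = (j.val - (2*k+1))/2) ∨
      (i.val < 2*k+1 ∧ 2*k+1 ≤ j.val) ∨ (j.val < 2*k+1 ∧ 2*k+1 ≤ i.val))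

instance mmsAdjDec (k : ℕ) : DecidableRel (mmsAdj k) := fun i j => by
  unfold mmsAdj; infer_instance

def mmsGraph (k : ℕ) : SimpleGraph (Fin (4 * k + 1)) where
  Adj := mmsAdj k
  symm := by
    constructor
    intro i j h
    obtain ⟨hne, h⟩ := h
    exact ⟨hne.symm, by tauto⟩
  loopless := by constructor; intro i h; exact h.1 rfl

instance (k : ℕ) : DecidableRel (mmsGraph k).Adj := mmsAdjDec k

lemma card_filter_val {N : ℕ} (p : ℕ → Prop) [DecidablePred p] :
    ((univ : Finset (Fin N)).filter fun j => p j.val).card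
      = ((range N).filter p).card := by
  apply Finset.card_nbij (fun j => j.val)
  · intro a ha
    simp only [coe_filter, mem_filter, mem_univ, true_and, Set.mem_setOf_eq] at ha
    simp [a.isLt, ha]
  · intro a _ b _ h; exact Fin.ext h
  · intro a ha
    simp only [coe_filter, mem_range, Set.mem_setOf_eq] at ha
    exact ⟨⟨a, ha.1⟩, by simp [ha.2], rfl⟩

lemma card_low (k : ℕ) :
    ((univ : Finset (Fin (4*k+1))).filter fun j => j.val < 2*k+1).card = 2*k+1 := by
  rw [card_filter_val (fun j => j < 2*k+1)]
  have : ((range (4*k+1)).filter fun j => j < 2*k+1) = range (2*k+1) := by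
    ext j; simp only [mem_filter, mem_range]; omega
  rw [this, card_range]

lemma card_high (k : ℕ) :
    ((univ : Finset (Fin (4*k+1))).filter fun j => ¬ j.val < 2*k+1).card = 2*k := by
  rw [card_filter_val (fun j => ¬ j < 2*k+1)]
  have : ((range (4*k+1)).filter fun j => ¬ j < 2*k+1) = Ico (2*k+1) (4*k+1) := by
    ext j; simp only [mem_filter, mem_range, mem_Ico]; omega
  rw [this, Nat.card_Ico]; omega

lemma mms_degree (k : ℕ) (hk : 0 < k) (v : Fin (4*k+1)) :
    (mmsGraph k).degree v = 2*k+2 := by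
  classical
  have hnb : (mmsGraph k).neighborFinset v = univ.filter ((mmsGraph k).Adj v) := by
    ext w; simp
  rw [SimpleGraph.degree, hnb]
  have hsplit := Finset.card_filter_add_card_filter_not
    (s := univ.filter ((mmsGraph k).Adj v)) (p := fun j => j.val < 2*k+1)
  rw [Finset.filter_filter, Finset.filter_filter] at hsplit
  by_cases hv : v.val < 2*k+1
  · -- cycle vertex
    have h1 : (univ.filter fun j : Fin (4*k+1) => (mmsGraph k).Adj v j ∧ ¬ j.val < 2*k+1)
        = univ.filter fun j => ¬ j.val < 2*k+1 := by
      ext j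
      simp only [mem_filter, mem_univ, true_and, and_iff_right_iff_imp]
      intro hj
      refine ⟨fun h => by simp [Fin.ext_iff] at h; omega, ?_⟩
      omega
    set a : Fin (4*k+1) := ⟨if v.val = 2*k then 0 else v.val + 1, by split <;> omega⟩ with ha
    set b : Fin (4*k+1) := ⟨if v.val = 0 then 2*k else v.val - 1, by split <;> omega⟩ with hb
    have h2 : (univ.filter fun j : Fin (4*k+1) => (mmsGraph k).Adj v j ∧ j.val < 2*k+1)
        = {a, b} := by
      ext j
      simp only [mem_filter, mem_univ, true_and, mem_insert, mem_singleton]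
      unfold mmsGraph mmsAdj
      simp only [ne_eq, Fin.ext_iff, ha, hb]
      constructor
      · rintro ⟨⟨hne, h⟩, hj⟩
        split <;> split <;> omega
      · intro h
        have hj : j.val < 2*k+1 := by rcases h with h | h <;> rw [h] <;> split <;> omega
        refine ⟨⟨?_, Or.inl ⟨hv, hj, ?_⟩⟩, hj⟩ <;> rcases h with h | h <;> rw [h] <;>
          split <;> omega
    have hab : a ≠ b := by
      simp only [ne_eq, Fin.ext_iff, ha, hb]
      split <;> split <;> omega
    rw [h1, h2, card_high, Finset.card_pair hab] at hsplit
    omega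
  · -- matching vertex
    have h1 : (univ.filter fun j : Fin (4*k+1) => (mmsGraph k).Adj v j ∧ j.val < 2*k+1)
        = univ.filter fun j => j.val < 2*k+1 := by
      ext j
      simp only [mem_filter, mem_univ, true_and, and_iff_right_iff_imp]
      intro hj
      refine ⟨fun h => by simp [Fin.ext_iff] at h; omega, ?_⟩
      omega
    set p : Fin (4*k+1) :=
      ⟨if (v.val - (2*k+1)) % 2 = 0 then v.val + 1 else v.val - 1, by
        have := v.isLt
        split
        · omega
        · omega⟩ with hp
    have h2 : (univ.filter fun j : Fin (4*k+1) => (mmsGraph k).Adj v j ∧ ¬ j.val < 2*k+1)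
        = {p} := by
      ext j
      simp only [mem_filter, mem_univ, true_and, mem_singleton]
      unfold mmsGraph mmsAdj
      simp only [ne_eq, Fin.ext_iff, hp]
      have := v.isLt
      have := j.isLt
      constructor
      · rintro ⟨⟨hne, h⟩, hj⟩
        split <;> omega
      · intro h
        split at h <;>
          exact ⟨⟨by omega, Or.inr (Or.inl ⟨by omega, by omega, by omega⟩)⟩, by omega⟩
    rw [h1, h2, card_low, Finset.card_singleton] at hsplit
    omega

theorem stmt8 (k : ℕ) (hk : 0 < k) :
    ∃ (G : SimpleGraph (Fin (4 * k + 1))) (_ : DecidableRel G.Adj),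
      G.IsRegularOfDegree (2 * k + 2) ∧ ¬ G.HasMMS := by
  classical
  refine ⟨mmsGraph k, inferInstance, fun v => mms_degree k hk v, ?_⟩
  intro h
  haveI : Nonempty (Fin (4*k+1)) := ⟨⟨0, by omega⟩⟩
  have hmin : (mmsGraph k).minDegree = 2*k+2 := by
    refine le_antisymm ?_ ?_
    · have := SimpleGraph.minDegree_le_degree (mmsGraph k) ⟨0, by omega⟩
      rwa [mms_degree k hk] at this
    · exact SimpleGraph.le_minDegree_of_forall_le_degree _ _ fun v => (mms_degree k hk v).ge
  set f : Fin (4*k+1) → ℝ :=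
    fun v => if v.val < 2*k+1 then ((2*k : ℕ) : ℝ) else -((2*k+1 : ℕ) : ℝ) with hf
  have hsum : 0 ≤ ∑ v, f v := by
    have hsplit := Finset.sum_filter_add_sum_filter_not (univ : Finset (Fin (4*k+1)))
      (fun v => v.val < 2*k+1) f
    have h1 : ∑ v ∈ univ.filter (fun v : Fin (4*k+1) => v.val < 2*k+1), f v
        = ((2*k+1 : ℕ) : ℝ) * ((2*k : ℕ) : ℝ) := by
      rw [Finset.sum_congr rfl (fun v hv => ?_), Finset.sum_const, card_low,
        nsmul_eq_mul]
      simp only [mem_filter, mem_univ, true_and] at hv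
      simp only [hf, if_pos hv]
    have h2 : ∑ v ∈ univ.filter (fun v : Fin (4*k+1) => ¬ v.val < 2*k+1), f v
        = ((2*k : ℕ) : ℝ) * (-((2*k+1 : ℕ) : ℝ)) := by
      rw [Finset.sum_congr rfl (fun v hv => ?_), Finset.sum_const, card_high,
        nsmul_eq_mul]
      simp only [mem_filter, mem_univ, true_and] at hv
      simp only [hf, if_neg hv]
    rw [← hsplit, h1, h2]
    have : ((2*k+1 : ℕ) : ℝ) * ((2*k : ℕ) : ℝ) + ((2*k : ℕ) : ℝ) * (-((2*k+1 : ℕ) : ℝ)) = 0 := by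
      push_cast; ring
    rw [this]
  have hle := h f hsum
  rw [hmin] at hle
  set nxt : Fin (4*k+1) → Fin (4*k+1) :=
    fun i => ⟨if 2*k ≤ i.val then 0 else i.val + 1, by split <;> omega⟩ with hnxt
  have hsub : ((mmsGraph k).edgeFinset.filter fun e =>
      0 ≤ Sym2.lift ⟨fun u v => f u + f v, fun _ _ => by ring⟩ e)
      ⊆ (univ.filter fun i : Fin (4*k+1) => i.val < 2*k+1).image fun i => s(i, nxt i) := by
    intro e he
    induction e using Sym2.ind with
    | _ a b =>
      simp only [mem_filter, SimpleGraph.mem_edgeFinset, SimpleGraph.mem_edgeSet,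
        Sym2.lift_mk] at he
      obtain ⟨hadj, hpos⟩ := he
      obtain ⟨hne, hcase⟩ := hadj
      have hvals : a.val < 2*k+1 ∧ b.val < 2*k+1 := by
        by_contra hcon
        have hneg : f a + f b < 0 := by
          rcases Nat.lt_or_ge a.val (2*k+1) with ha | ha <;>
            rcases Nat.lt_or_ge b.val (2*k+1) with hb | hb
          · exact absurd ⟨ha, hb⟩ hcon
          · simp only [hf]
            rw [if_pos ha, if_neg (by omega)]
            push_cast; linarith
          · simp only [hf]
            rw [if_neg (by omega), if_pos hb]
            push_cast; linarith
          · simp only [hf]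
            rw [if_neg (by omega), if_neg (by omega)]
            push_cast; linarith
        linarith
      obtain ⟨ha, hb⟩ := hvals
      have hcyc : (b:ℕ) = (a:ℕ) + 1 ∨ (a:ℕ) = (b:ℕ) + 1 ∨ ((a:ℕ) = 0 ∧ (b:ℕ) = 2*k) ∨ ((b:ℕ) = 0 ∧ (a:ℕ) = 2*k) := by
        rcases hcase with ⟨_, _, hc⟩ | hc | hc | hc
        · exact hc
        all_goals omega
      simp only [Finset.mem_image, mem_filter, mem_univ, true_and]
      rcases hcyc with hc | hc | ⟨hc1, hc2⟩ | ⟨hc1, hc2⟩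
      · refine ⟨a, ha, ?_⟩
        have : nxt a = b := Fin.ext (by simp only [hnxt]; split <;> omega)
        rw [this]
      · refine ⟨b, hb, ?_⟩
        have : nxt b = a := Fin.ext (by simp only [hnxt]; split <;> omega)
        rw [this]; exact Sym2.eq_swap
      · refine ⟨b, hb, ?_⟩
        have : nxt b = a := Fin.ext (by simp only [hnxt]; split <;> omega)
        rw [this]; exact Sym2.eq_swap
      · refine ⟨a, ha, ?_⟩
        have : nxt a = b := Fin.ext (by simp only [hnxt]; split <;> omega)
        rw [this]
  have hcard : ((mmsGraph k).edgeFinset.filter fun e =>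
      0 ≤ Sym2.lift ⟨fun u v => f u + f v, fun _ _ => by ring⟩ e).card ≤ 2*k+1 := by
    calc _ ≤ ((univ.filter fun i : Fin (4*k+1) => i.val < 2*k+1).image
          fun i => s(i, nxt i)).card := Finset.card_le_card hsub
      _ ≤ (univ.filter fun i : Fin (4*k+1) => i.val < 2*k+1).card := Finset.card_image_le
      _ = 2*k+1 := card_low k
  omega
end

section
/- Let H = (V, E) be a k-uniform hypergraph with minimum degree δ. Suppose that for every E' ⊆ E with |E'| ≤ δ − 1, every independent set A in H − E' admits a pseudo-matching saturating A in H − E'. Then H has the MMS property: for every f : V → ℝ with ∑_v f(v) ≥ 0, at least δ edges e satisfy ∑_{v∈e} f(v) ≥ 0. -/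
open Finset
open scoped Classical

/-- The degree of a vertex in a hypergraph given by its edge set. -/
def hypDeg {V : Type*} [DecidableEq V] (E : Finset (Finset V)) (v : V) : ℕ :=
  (E.filter fun e => v ∈ e).card

/-- The minimum degree of a hypergraph on a finite vertex type. -/
noncomputable def hypMinDeg {V : Type*} [Fintype V] [DecidableEq V] (E : Finset (Finset V)) : ℕ :=
  ⨅ v : V, hypDeg E v

theorem stmt9 {V : Type*} [Fintype V] [DecidableEq V] (k : ℕ)
    (E : Finset (Finset V)) (hunif : ∀ e ∈ E, e.card = k)
    (hyp : ∀ E' ⊆ E, E'.card < hypMinDeg E →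
      ∀ A : Finset V, (∀ e ∈ E \ E', ¬ e ⊆ A) →
        ∃ M ⊆ E \ E', (∀ e ∈ M, ∀ f ∈ M, e ≠ f → e ∩ f ⊆ A) ∧ A ⊆ M.biUnion id)
    (f : V → ℝ) (hf : 0 ≤ ∑ v, f v) :
    hypMinDeg E ≤ (E.filter fun e =>
      (0 : ℝ) ≤ ∑ v ∈ e, f v).card := by
  by_contra hcon
  push_neg at hcon
  rcases isEmpty_or_nonempty V with hV | hV
  · have h0 : hypMinDeg E = 0 := by
      simp [hypMinDeg, iInf, Set.range_eq_empty, Nat.sInf_empty]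
    rw [h0] at hcon
    exact absurd hcon (Nat.not_lt_zero _)
  · set E' := E.filter (fun e => (0:ℝ) ≤ ∑ v ∈ e, f v) with hE'
    set A := univ.filter (fun v => (0:ℝ) ≤ f v) with hA
    have hneg : ∀ e ∈ E \ E', ∑ v ∈ e, f v < 0 := by
      intro e he
      rw [Finset.mem_sdiff, hE', Finset.mem_filter] at he
      have := he.2
      push_neg at this
      exact this he.1
    have hind : ∀ e ∈ E \ E', ¬ e ⊆ A := by
      intro e he hsub
      have hnn : (0:ℝ) ≤ ∑ v ∈ e, f v := Finset.sum_nonneg (fun v hv => by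
        have := hsub hv
        rw [hA, Finset.mem_filter] at this
        exact this.2)
      exact absurd hnn (not_le.mpr (hneg e he))
    obtain ⟨M, hME, hMint, hMcov⟩ := hyp E' (filter_subset _ _) hcon A hind
    -- rewrite the matching sum via multiplicities
    have hrw : ∑ e ∈ M, ∑ v ∈ e, f v
        = ∑ v, ((M.filter (fun e => v ∈ e)).card : ℝ) * f v := by
      have h1 : ∀ e ∈ M, ∑ v ∈ e, f v = ∑ v, (if v ∈ e then f v else 0) := by
        intro e _
        rw [← Finset.sum_filter]
        congr 1
        ext v; simp
      calc ∑ e ∈ M, ∑ v ∈ e, f v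
          = ∑ e ∈ M, ∑ v, (if v ∈ e then f v else 0) := Finset.sum_congr rfl h1
        _ = ∑ v, ∑ e ∈ M, (if v ∈ e then f v else 0) := Finset.sum_comm
        _ = ∑ v, ((M.filter (fun e => v ∈ e)).card : ℝ) * f v := by
            apply Finset.sum_congr rfl
            intro v _
            rw [← Finset.sum_filter, Finset.sum_const, nsmul_eq_mul]
    have key : ∑ v, f v ≤ ∑ e ∈ M, ∑ v ∈ e, f v := by
      rw [hrw]
      apply Finset.sum_le_sum
      intro v _
      by_cases hv : (0:ℝ) ≤ f v
      · have hvA : v ∈ A := by rw [hA, Finset.mem_filter]; exact ⟨Finset.mem_univ _, hv⟩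
        have := hMcov hvA
        rw [Finset.mem_biUnion] at this
        obtain ⟨e, heM, hve⟩ := this
        have hcard : 1 ≤ (M.filter (fun e => v ∈ e)).card :=
          Finset.card_pos.mpr ⟨e, Finset.mem_filter.mpr ⟨heM, hve⟩⟩
        calc f v = 1 * f v := (one_mul _).symm
          _ ≤ ((M.filter (fun e => v ∈ e)).card : ℝ) * f v :=
            mul_le_mul_of_nonneg_right (by exact_mod_cast hcard) hv
      · have hfv : f v < 0 := not_le.mp hv
        have hcard : (M.filter (fun e => v ∈ e)).card ≤ 1 := by
          rw [Finset.card_le_one]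
          intro a ha b hb
          rw [Finset.mem_filter] at ha hb
          by_contra hab
          have hvab : v ∈ a ∩ b := Finset.mem_inter.mpr ⟨ha.2, hb.2⟩
          have := hMint a ha.1 b hb.1 hab hvab
          rw [hA, Finset.mem_filter] at this
          exact hv this.2
        calc f v = 1 * f v := (one_mul _).symm
          _ ≤ ((M.filter (fun e => v ∈ e)).card : ℝ) * f v := by
            apply mul_le_mul_of_nonpos_right _ hfv.le
            exact_mod_cast hcard
    have hS : ∑ e ∈ M, ∑ v ∈ e, f v ≤ 0 :=
      Finset.sum_nonpos (fun e he => (hneg e (hME he)).le)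
    have hSz : ∑ e ∈ M, ∑ v ∈ e, f v = 0 := le_antisymm hS (le_trans hf key)
    have hMe : M = ∅ := by
      by_contra hne
      have : ∑ e ∈ M, ∑ v ∈ e, f v < 0 :=
        Finset.sum_neg (fun e he => hneg e (hME he)) (Finset.nonempty_iff_ne_empty.mpr hne)
      linarith [hSz]
    have hAe : A = ∅ := by
      rw [hMe] at hMcov
      simpa using Finset.subset_empty.mp (by simpa using hMcov)
    have hall : ∀ v : V, f v < 0 := by
      intro v
      by_contra hv
      push_neg at hv
      have : v ∈ A := by rw [hA, Finset.mem_filter]; exact ⟨Finset.mem_univ _, hv⟩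
      rw [hAe] at this
      exact absurd this (Finset.notMem_empty _)
    have : ∑ v, f v < 0 :=
      Finset.sum_neg (fun v _ => hall v) Finset.univ_nonempty
    linarith
end

section
/- Let H be a k-uniform hypergraph on vertex set [n] with minimum degree δ that has the MMS property. Let H^{⊕m} be the mk-uniform hypergraph on [mn] obtained by replacing each vertex i ∈ [n] with the class V_i = {i + jn : 0 ≤ j ≤ m−1} and each edge e of H with the edge ∪_{i∈e} V_i. Then H^{⊕m} has minimum degree δ and has the MMS property. -/
open Finset

/-- The class of clones of a vertex `i : Fin n` in the blowout on `Fin (m * n)`: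
the vertices `i + j * n` for `0 ≤ j ≤ m - 1`. -/
def cloneClass (n m : ℕ) (i : Fin n) : Finset (Fin (m * n)) :=
  (Finset.univ : Finset (Fin m)).image fun (j : Fin m) => Fin.mk ((i : ℕ) + (j : ℕ) * n) (by
      have h1 : (i : ℕ) < n := i.is_lt
      have h2 : (j : ℕ) < m := j.is_lt
      have h3 : ((j : ℕ) + 1) * n ≤ m * n := Nat.mul_le_mul_right n h2
      nlinarith)

/-- The blowout `H^{⊕m}`: each edge of `H` is replaced by the union of the clone
classes of its vertices. -/
def blowout (n m : ℕ) (E : Finset (Finset (Fin n))) : Finset (Finset (Fin (m * n))) :=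
  E.image fun e => e.biUnion (cloneClass n m)

lemma mem_cloneClass {n m : ℕ} (i : Fin n) (w : Fin (m * n)) :
    w ∈ cloneClass n m i ↔ (w : ℕ) % n = (i : ℕ) := by
  have hn : 0 < n := i.pos
  simp only [cloneClass, mem_image, mem_univ, true_and]
  constructor
  · rintro ⟨j, hj⟩
    have hw : (w : ℕ) = (i : ℕ) + (j : ℕ) * n := by rw [← hj]
    rw [hw, Nat.add_mul_mod_self_right, Nat.mod_eq_of_lt i.is_lt]
  · intro h
    have hj : (w : ℕ) / n < m := (Nat.div_lt_iff_lt_mul hn).2 w.is_lt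
    exact ⟨⟨_, hj⟩, Fin.ext (by simp only [← h]; exact Nat.mod_add_div' _ _)⟩

lemma card_cloneClass {n m : ℕ} (hn : 0 < n) (i : Fin n) :
    (cloneClass n m i).card = m := by
  rw [cloneClass, card_image_of_injective _ ?_, card_univ, Fintype.card_fin]
  intro j1 j2 h
  have := Fin.mk.injEq .. ▸ h
  have h' : (j1 : ℕ) * n = (j2 : ℕ) * n := by
    have := Fin.val_eq_of_eq h
    simpa using this
  exact Fin.ext (Nat.eq_of_mul_eq_mul_right hn h')

lemma disj_cloneClass {n m : ℕ} {i i' : Fin n} (h : i ≠ i') :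
    Disjoint (cloneClass n m i) (cloneClass n m i') := by
  rw [Finset.disjoint_left]
  intro w hw hw'
  rw [mem_cloneClass] at hw hw'
  exact h (Fin.ext (hw ▸ hw'))

section main
variable {n m : ℕ} (hn : 0 < n)
include hn

def idx (hn : 0 < n) (w : Fin (m * n)) : Fin n := ⟨(w : ℕ) % n, Nat.mod_lt _ hn⟩

lemma mem_biUnion_clone (e : Finset (Fin n)) (w : Fin (m * n)) :
    w ∈ e.biUnion (cloneClass n m) ↔ idx hn w ∈ e := by
  simp only [Finset.mem_biUnion, mem_cloneClass]
  constructor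
  · rintro ⟨i, hi, h⟩
    have : idx hn w = i := Fin.ext h
    rwa [this]
  · intro h
    exact ⟨idx hn w, h, rfl⟩

lemma idx_surj (hm : 0 < m) : Function.Surjective (idx (m := m) hn) := by
  intro i
  refine ⟨⟨(i : ℕ), lt_of_lt_of_le i.is_lt (Nat.le_mul_of_pos_left n hm)⟩, Fin.ext ?_⟩
  exact Nat.mod_eq_of_lt i.is_lt

lemma blowout_injOn (hm : 0 < m) :
    Set.InjOn (fun e : Finset (Fin n) => e.biUnion (cloneClass n m)) Set.univ := by
  intro e1 _ e2 _ h
  have key : ∀ e1 e2 : Finset (Fin n),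
      e1.biUnion (cloneClass n m) = e2.biUnion (cloneClass n m) → e1 ⊆ e2 := by
    intro e1 e2 h i hi
    have hne : (cloneClass n m i).Nonempty := by
      rw [← Finset.card_pos, card_cloneClass hn]; exact hm
    obtain ⟨w, hw⟩ := hne
    have : w ∈ e2.biUnion (cloneClass n m) := by
      rw [← h]; exact Finset.mem_biUnion.2 ⟨i, hi, hw⟩
    rw [mem_biUnion_clone hn] at this
    have heq : idx hn w = i := Fin.ext ((mem_cloneClass i w).1 hw)
    rwa [heq] at this
  exact Finset.Subset.antisymm (key _ _ h) (key _ _ h.symm)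

lemma deg_blowout (hm : 0 < m) (E : Finset (Finset (Fin n))) (w : Fin (m * n)) :
    hypDeg (blowout n m E) w = hypDeg E (idx hn w) := by
  classical
  unfold hypDeg blowout
  rw [Finset.filter_image]
  rw [Finset.card_image_of_injOn ((blowout_injOn hn hm).mono (by simp))]
  congr 1
  apply Finset.filter_congr
  intro e _
  simp [mem_biUnion_clone hn]

end main

section main2
variable {n m : ℕ} (hn : 0 < n)
include hn

lemma minDeg_blowout (hm : 0 < m) (E : Finset (Finset (Fin n))) :
    hypMinDeg (blowout n m E) = hypMinDeg E := by
  classical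
  unfold hypMinDeg
  have h1 : ∀ w : Fin (m * n), hypDeg (blowout n m E) w = (hypDeg E ∘ idx hn) w :=
    fun w => deg_blowout hn hm E w
  rw [show (fun w : Fin (m*n) => hypDeg (blowout n m E) w) = hypDeg E ∘ idx hn from funext h1]
  rw [iInf, iInf, Function.Surjective.range_comp (idx_surj hn hm) (hypDeg E)]

lemma card_biUnion_clone (e : Finset (Fin n)) :
    (e.biUnion (cloneClass n m)).card = m * e.card := by
  rw [Finset.card_biUnion (fun i _ i' _ h => disj_cloneClass h)]
  simp [card_cloneClass hn, mul_comm]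

lemma sum_biUnion_clone (e : Finset (Fin n)) (f : Fin (m * n) → ℝ) :
    ∑ v ∈ e.biUnion (cloneClass n m), f v
      = ∑ i ∈ e, ∑ v ∈ cloneClass n m i, f v :=
  Finset.sum_biUnion (fun i _ i' _ h => disj_cloneClass h)

lemma univ_eq_biUnion_clone :
    (Finset.univ : Finset (Fin (m * n))) = Finset.univ.biUnion (cloneClass n m) := by
  ext w
  simp only [mem_univ, true_iff]
  exact (mem_biUnion_clone hn Finset.univ w).2 (mem_univ _)

end main2


open scoped Classical in
theorem stmt10 (n m k : ℕ) (hm : 0 < m)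
    (E : Finset (Finset (Fin n))) (hunif : ∀ e ∈ E, e.card = k)
    (hmms : ∀ f : Fin n → ℝ, 0 ≤ ∑ v, f v →
      hypMinDeg E ≤ (E.filter fun e => (0 : ℝ) ≤ ∑ v ∈ e, f v).card) :
    hypMinDeg (blowout n m E) = hypMinDeg E ∧
    (∀ e ∈ blowout n m E, e.card = m * k) ∧
    ∀ f : Fin (m * n) → ℝ, 0 ≤ ∑ v, f v →
      hypMinDeg (blowout n m E) ≤
        ((blowout n m E).filter fun e => (0 : ℝ) ≤ ∑ v ∈ e, f v).card := by
  rcases Nat.eq_zero_or_pos n with hn | hn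
  · subst hn
    haveI : IsEmpty (Fin (m * 0)) := ⟨fun w => absurd w.is_lt (by simp)⟩
    have hmd : hypMinDeg (blowout 0 m E) = 0 := by
      simp [hypMinDeg, iInf, Set.range_eq_empty, Nat.sInf_empty]
    have hmd' : hypMinDeg E = 0 := by
      simp [hypMinDeg, iInf, Set.range_eq_empty, Nat.sInf_empty]
    refine ⟨by rw [hmd, hmd'], ?_, ?_⟩
    · intro e he
      simp only [blowout, Finset.mem_image] at he
      obtain ⟨e', he', rfl⟩ := he
      have : e' = ∅ := Finset.eq_empty_of_isEmpty e'
      subst this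
      have : k = 0 := by simpa using (hunif ∅ he').symm
      simp [this]
    · intro f _
      rw [hmd]
      exact Nat.zero_le _
  · constructor
    · exact minDeg_blowout hn hm E
    · constructor
      · intro e he
        simp only [blowout, Finset.mem_image] at he
        obtain ⟨e', he', rfl⟩ := he
        rw [card_biUnion_clone hn, hunif e' he']
      · intro f hf
        set g : Fin n → ℝ := fun i => ∑ v ∈ cloneClass n m i, f v with hg
        have hsum : 0 ≤ ∑ i, g i := by
          rw [hg]
          rw [← sum_biUnion_clone hn Finset.univ f, ← univ_eq_biUnion_clone hn]
          exact hf
        have key := hmms g hsum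
        rw [minDeg_blowout hn hm E]
        refine le_trans key (le_of_eq ?_)
        unfold blowout
        rw [Finset.filter_image]
        rw [Finset.card_image_of_injOn ((blowout_injOn hn hm).mono (by simp))]
        congr 1
        apply Finset.filter_congr
        intro e _
        rw [sum_biUnion_clone hn e f]
end

section
/- Let F_1, ..., F_t be pairwise edge-disjoint r-uniform hypergraphs on the same vertex set, where each F_i is d_i-regular and has the MMS property. Then F = F_1 ∪ ... ∪ F_t is (∑ d_i)-regular and has the MMS property. -/
open Finset
open scoped Classical

theorem stmt11 {V : Type*} [Fintype V] [DecidableEq V] (t r : ℕ)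
    (F : Fin t → Finset (Finset V)) (d : Fin t → ℕ)
    (hunif : ∀ i, ∀ e ∈ F i, e.card = r)
    (hreg : ∀ i, ∀ v, hypDeg (F i) v = d i)
    (hdisj : ∀ i j, i ≠ j → Disjoint (F i) (F j))
    (hmms : ∀ i, ∀ f : V → ℝ, 0 ≤ ∑ v, f v →
      d i ≤ ((F i).filter fun e => (0 : ℝ) ≤ ∑ v ∈ e, f v).card) :
    (∀ v, hypDeg (Finset.univ.biUnion F) v = ∑ i, d i) ∧
    ∀ f : V → ℝ, 0 ≤ ∑ v, f v →
      ∑ i, d i ≤ ((Finset.univ.biUnion F).filter fun e =>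
        (0 : ℝ) ≤ ∑ v ∈ e, f v).card := by
  constructor
  · intro v
    unfold hypDeg
    rw [Finset.filter_biUnion, Finset.card_biUnion]
    · exact Finset.sum_congr rfl fun i _ => hreg i v
    · intro i _ j _ hij
      exact (hdisj i j hij).mono (Finset.filter_subset _ _) (Finset.filter_subset _ _)
  · intro f hf
    rw [Finset.filter_biUnion, Finset.card_biUnion]
    · exact Finset.sum_le_sum fun i _ => hmms i f hf
    · intro i _ j _ hij
      exact (hdisj i j hij).mono (Finset.filter_subset _ _) (Finset.filter_subset _ _)
end

section
/- Let p > 2 be prime. For each pair (a,b) with a ∈ {1, ..., (p−1)/2} and b ∈ ℤ_p, define the pairing P_{a,b} = { {(x,0), (ax+b,1)} : x ∈ ℤ_p } of the vertex set ℤ_p × ℤ_2. Then these C(p,2) pairings are pairwise conflictless: for distinct (a,b) ≠ (c,d), there do not exist two pairs e_1, e_2 ∈ P_{a,b} and two pairs f_1, f_2 ∈ P_{c,d} with e_1 ∪ e_2 = f_1 ∪ f_2. -/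
open Finset

theorem stmt13 (p : ℕ) (hp : p.Prime) (hp2 : 2 < p)
    (a b c d : ZMod p)
    (ha : 1 ≤ a.val ∧ a.val ≤ (p - 1) / 2)
    (hc : 1 ≤ c.val ∧ c.val ≤ (p - 1) / 2)
    (hne : (a, b) ≠ (c, d)) :
    ¬ ∃ x y x' y' : ZMod p, x ≠ y ∧ x' ≠ y' ∧
      (({(x, (0 : ZMod 2)), (a * x + b, 1)} ∪ {(y, 0), (a * y + b, 1)} :
          Finset (ZMod p × ZMod 2)) =
        ({(x', 0), (c * x' + d, 1)} ∪ {(y', 0), (c * y' + d, 1)})) := by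
  haveI : Fact p.Prime := ⟨hp⟩
  have ha0 : a ≠ 0 := by
    intro h; rw [h] at ha; simp [ZMod.val_zero] at ha
  have hc0 : c ≠ 0 := by
    intro h; rw [h] at hc; simp [ZMod.val_zero] at hc
  -- a + c ≠ 0
  have hac : a + c ≠ 0 := by
    intro h
    have hv : (a + c).val = (a.val + c.val) % p := ZMod.val_add a c
    rw [h, ZMod.val_zero] at hv
    have h1 : 1 ≤ a.val := ha.1
    have h2 : a.val ≤ (p - 1) / 2 := ha.2
    have h3 : 1 ≤ c.val := hc.1
    have h4 : c.val ≤ (p - 1) / 2 := hc.2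
    have hlt : a.val + c.val < p := by omega
    rw [Nat.mod_eq_of_lt hlt] at hv
    omega
  rintro ⟨x, y, x', y', hxy, hxy', heq⟩
  have h := Finset.ext_iff.mp heq
  have h01 : (0 : ZMod 2) ≠ 1 := by decide
  have hx : x = x' ∨ x = y' := by
    have := (h (x, 0)).mp (by simp)
    exact Or.symm (by simpa [Prod.ext_iff, h01] using this)
  have hy : y = x' ∨ y = y' := by
    have := (h (y, 0)).mp (by simp)
    exact Or.symm (by simpa [Prod.ext_iff, h01] using this)
  have hu : a * x + b = c * x' + d ∨ a * x + b = c * y' + d := by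
    have := (h (a * x + b, 1)).mp (by simp)
    simpa [Prod.ext_iff, h01.symm] using this
  have hv : a * y + b = c * x' + d ∨ a * y + b = c * y' + d := by
    have := (h (a * y + b, 1)).mp (by simp)
    simpa [Prod.ext_iff, h01.symm] using this
  have hxysub : x - y ≠ 0 := sub_ne_zero.mpr hxy
  have key : ∀ u v : ZMod p,
      (a * x + b = c * u + d ∨ a * x + b = c * v + d) →
      (a * y + b = c * u + d ∨ a * y + b = c * v + d) →
      ({x, y} : Set (ZMod p)) = {u, v} → False := by
    intro u v h1 h2 hset
    rcases h1 with h1 | h1 <;> rcases h2 with h2 | h2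
    · -- a*x+b = c*u+d and a*y+b = c*u+d ⇒ x = y
      have : a * (x - y) = 0 := by linear_combination h1 - h2
      rcases mul_eq_zero.mp this with h | h
      · exact ha0 h
      · exact hxysub h
    · -- a*x+b = c*u+d and a*y+b = c*v+d ⇒ a = c, b = d (using {x,y}={u,v})
      have hcases : (x = u ∧ y = v) ∨ (x = v ∧ y = u) := by
        have hxm : x ∈ ({u, v} : Set (ZMod p)) := by rw [← hset]; simp
        have hym : y ∈ ({u, v} : Set (ZMod p)) := by rw [← hset]; simp
        simp only [Set.mem_insert_iff, Set.mem_singleton_iff] at hxm hym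
        rcases hxm with h | h <;> rcases hym with h' | h'
        · exact absurd (h.trans h'.symm) hxy
        · exact Or.inl ⟨h, h'⟩
        · exact Or.inr ⟨h, h'⟩
        · exact absurd (h.trans h'.symm) hxy
      rcases hcases with ⟨rfl, rfl⟩ | ⟨rfl, rfl⟩
      · -- x=u, y=v : (a-c)(x-y)=0 ⇒ a=c ⇒ b=d
        have : (a - c) * (x - y) = 0 := by linear_combination h1 - h2
        rcases mul_eq_zero.mp this with h | h
        · have hac' : a = c := sub_eq_zero.mp h
          have hbd : b = d := by linear_combination h1 - x * h
          exact hne (by rw [hac', hbd])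
        · exact hxysub h
      · -- x=v, y=u : (a+c)(x-y)=0 ⇒ a+c=0, contradiction
        have : (a + c) * (x - y) = 0 := by linear_combination h1 - h2
        rcases mul_eq_zero.mp this with h | h
        · exact hac h
        · exact hxysub h
    · -- a*x+b = c*v+d and a*y+b = c*u+d : symmetric
      have hcases : (x = u ∧ y = v) ∨ (x = v ∧ y = u) := by
        have hxm : x ∈ ({u, v} : Set (ZMod p)) := by rw [← hset]; simp
        have hym : y ∈ ({u, v} : Set (ZMod p)) := by rw [← hset]; simp
        simp only [Set.mem_insert_iff, Set.mem_singleton_iff] at hxm hym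
        rcases hxm with h | h <;> rcases hym with h' | h'
        · exact absurd (h.trans h'.symm) hxy
        · exact Or.inl ⟨h, h'⟩
        · exact Or.inr ⟨h, h'⟩
        · exact absurd (h.trans h'.symm) hxy
      rcases hcases with ⟨rfl, rfl⟩ | ⟨rfl, rfl⟩
      · -- x=u, y=v : a*x+b = c*y+d, a*y+b = c*x+d ⇒ (a+c)(x-y)=0
        have : (a + c) * (x - y) = 0 := by linear_combination h1 - h2
        rcases mul_eq_zero.mp this with h | h
        · exact hac h
        · exact hxysub h
      · -- x=v, y=u : a*x+b = c*x+d, a*y+b = c*y+d ⇒ a=c, b=d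
        have : (a - c) * (x - y) = 0 := by linear_combination h1 - h2
        rcases mul_eq_zero.mp this with h | h
        · have hac' : a = c := sub_eq_zero.mp h
          have hbd : b = d := by linear_combination h1 - x * h
          exact hne (by rw [hac', hbd])
        · exact hxysub h
    · -- both = c*v+d ⇒ x = y
      have : a * (x - y) = 0 := by linear_combination h1 - h2
      rcases mul_eq_zero.mp this with h | h
      · exact ha0 h
      · exact hxysub h
  have hset : ({x, y} : Set (ZMod p)) = {x', y'} := by
    rcases hx with rfl | rfl <;> rcases hy with rfl | rfl
    · exact absurd rfl hxy
    · rfl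
    · ext z; simp; tauto
    · exact absurd rfl hxy
  exact key x' y' hu hv hset
end

section
/- Let p > 2 be prime and m a positive integer. There exists a conflictless family of C(p,2)^{m−1} partitions of ℤ_p × ℤ_m into p blocks of size m: for each tuple ((a_1,b_1),...,(a_{m−1},b_{m−1})) with a_i ∈ {1,...,(p−1)/2}, b_i ∈ ℤ_p, take the partition with blocks { (x,0), (a_1 x + b_1, 1), ..., (a_{m−1} x + b_{m−1}, m−1) } for x ∈ ℤ_p; distinct tuples give partitions such that no union of two blocks of one equals a union of two blocks of the other. -/
open Finset

lemma pair_eq14 {p : ℕ} [Fact p.Prime] {x y A B C D : ZMod p} (hxy : x ≠ y)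
    (hA : A ≠ 0) (hC : C ≠ 0) (hAC : A + C ≠ 0)
    (h : ∀ v : ZMod p, (v = A*x+B ∨ v = A*y+B) ↔ (v = C*x+D ∨ v = C*y+D)) :
    A = C ∧ B = D := by
  have hxy' : x - y ≠ 0 := sub_ne_zero.mpr hxy
  have h1 := (h (A*x+B)).mp (Or.inl rfl)
  have h2 := (h (A*y+B)).mp (Or.inr rfl)
  have h3 := (h (C*x+D)).mpr (Or.inl rfl)
  rcases h1 with h1 | h1
  · rcases h2 with h2 | h2
    · exfalso
      have hz : A * (x - y) = 0 := by linear_combination h1 - h2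
      rcases mul_eq_zero.mp hz with h | h
      · exact hA h
      · exact hxy' h
    · have hz : (A - C) * (x - y) = 0 := by linear_combination h1 - h2
      rcases mul_eq_zero.mp hz with h | h
      · have hac : A = C := by linear_combination h
        refine ⟨hac, ?_⟩
        linear_combination h1 - x * h
      · exact absurd h hxy'
  · rcases h3 with h3 | h3
    · exfalso
      have hz : C * (x - y) = 0 := by linear_combination h1 + h3
      rcases mul_eq_zero.mp hz with h | h
      · exact hC h
      · exact hxy' h
    · exfalso
      have hz : (A + C) * (x - y) = 0 := by linear_combination h1 + h3
      rcases mul_eq_zero.mp hz with h | h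
      · exact hAC h
      · exact hxy' h

theorem stmt14 (p m : ℕ) (hp : p.Prime) (hp2 : 2 < p) (hm : 0 < m)
    (a b c d : Fin m → ZMod p)
    (ha0 : a ⟨0, hm⟩ = 1) (hb0 : b ⟨0, hm⟩ = 0)
    (hc0 : c ⟨0, hm⟩ = 1) (hd0 : d ⟨0, hm⟩ = 0)
    (ha : ∀ i : Fin m, (i : ℕ) ≠ 0 → 1 ≤ (a i).val ∧ (a i).val ≤ (p - 1) / 2)
    (hc : ∀ i : Fin m, (i : ℕ) ≠ 0 → 1 ≤ (c i).val ∧ (c i).val ≤ (p - 1) / 2)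
    (hne : (a, b) ≠ (c, d)) :
    ¬ ∃ x y x' y' : ZMod p, x ≠ y ∧ x' ≠ y' ∧
      ((Finset.univ.image fun i : Fin m => (a i * x + b i, i)) ∪
        (Finset.univ.image fun i : Fin m => (a i * y + b i, i)) =
       (Finset.univ.image fun i : Fin m => (c i * x' + d i, i)) ∪
        (Finset.univ.image fun i : Fin m => (c i * y' + d i, i))) := by
  haveI : Fact p.Prime := ⟨hp⟩
  haveI : NeZero p := ⟨hp.ne_zero⟩
  rintro ⟨x, y, x', y', hxy, hxy', heq⟩
  have hodd : p % 2 = 1 := Nat.odd_iff.mp (hp.odd_of_ne_two (by omega))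
  have h1p : 1 < p := by omega
  -- uniform val bounds
  have hva : ∀ i : Fin m, 1 ≤ (a i).val ∧ (a i).val ≤ (p - 1) / 2 := by
    intro i
    by_cases hi : (i : ℕ) = 0
    · have : i = ⟨0, hm⟩ := Fin.ext hi
      rw [this, ha0, ZMod.val_one]
      omega
    · exact ha i hi
  have hvc : ∀ i : Fin m, 1 ≤ (c i).val ∧ (c i).val ≤ (p - 1) / 2 := by
    intro i
    by_cases hi : (i : ℕ) = 0
    · have : i = ⟨0, hm⟩ := Fin.ext hi
      rw [this, hc0, ZMod.val_one]
      omega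
    · exact hc i hi
  have hane : ∀ i, a i ≠ 0 := by
    intro i h
    have := (hva i).1
    rw [h, ZMod.val_zero] at this
    omega
  have hcne : ∀ i, c i ≠ 0 := by
    intro i h
    have := (hvc i).1
    rw [h, ZMod.val_zero] at this
    omega
  have hsum : ∀ i, a i + c i ≠ 0 := by
    intro i h
    have h1 := hva i
    have h2 := hvc i
    have hlt : (a i).val + (c i).val < p := by omega
    have hv := ZMod.val_add (a i) (c i)
    rw [h, ZMod.val_zero, Nat.mod_eq_of_lt hlt] at hv
    omega
  have key : ∀ (i : Fin m) (v : ZMod p),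
      (v = a i * x + b i ∨ v = a i * y + b i) ↔ (v = c i * x' + d i ∨ v = c i * y' + d i) := by
    intro i v
    have h := Finset.ext_iff.mp heq (v, i)
    simpa [Prod.ext_iff, eq_comm] using h
  have key0 : ∀ v : ZMod p, (v = x ∨ v = y) ↔ (v = x' ∨ v = y') := by
    intro v
    have := key ⟨0, hm⟩ v
    simpa [ha0, hb0, hc0, hd0] using this
  apply hne
  have hmain : ∀ i, a i = c i ∧ b i = d i := by
    intro i
    rcases (key0 x).mp (Or.inl rfl) with hx | hx
    · have hy : y = y' := by
        rcases (key0 y).mp (Or.inr rfl) with hy | hy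
        · exact absurd (hx.trans hy.symm) hxy
        · exact hy
      refine pair_eq14 hxy (hane i) (hcne i) (hsum i) ?_
      intro v
      rw [key i v, ← hx, ← hy]
    · have hy : y = x' := by
        rcases (key0 y).mp (Or.inr rfl) with hy | hy
        · exact hy
        · exact absurd (hx.trans hy.symm) hxy
      refine pair_eq14 hxy (hane i) (hcne i) (hsum i) ?_
      intro v
      rw [key i v, ← hx, ← hy, or_comm]
  exact Prod.ext (funext fun i => (hmain i).1) (funext fun i => (hmain i).2)
end

section
/- Let G be a d-regular graph on n vertices with n ≥ 8 and d ≥ ⌈n/2⌉ + 2, let E' ⊆ E(G) with |E'| ≤ d − 1, and let A be an independent set in G − E'. Then |A| ≤ ⌈n/2⌉; moreover if every vertex of A has degree at most |A| − 1 in G − E', then (d−1) ≥ (|A|/2)(d − |A| + 1), which is impossible for d/2 ≤ |A| ≤ ⌈n/2⌉. -/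
open Finset
open scoped Classical

private lemma sym2_filter_le_two {V : Type*} [Fintype V] [DecidableEq V]
    (A : Finset V) (e : Sym2 V) : (A.filter (fun v => v ∈ e)).card ≤ 2 := by
  induction e with
  | _ x y =>
    calc (A.filter (fun v => v ∈ s(x,y))).card ≤ ({x, y} : Finset V).card := by
          apply Finset.card_le_card
          intro v hv
          simp only [Finset.mem_filter, Sym2.mem_iff] at hv
          simp [hv.2]
      _ ≤ 2 := Finset.card_insert_le _ _ |>.trans (by simp)

theorem stmt18 {V : Type*} [Fintype V] [DecidableEq V]
    (G : SimpleGraph V) [DecidableRel G.Adj] (n d : ℕ)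
    (hcard : Fintype.card V = n) (hn : 8 ≤ n) (hd : (n + 1) / 2 + 2 ≤ d)
    (hreg : G.IsRegularOfDegree d)
    (E' : Finset (Sym2 V)) (hsub : ↑E' ⊆ G.edgeSet) (hE' : E'.card ≤ d - 1)
    (A : Finset V) (hind : ∀ u ∈ A, ∀ v ∈ A, ¬ (G.deleteEdges ↑E').Adj u v) :
    A.card ≤ (n + 1) / 2 ∧
    ((∀ a ∈ A, ((G.deleteEdges (↑E' : Set (Sym2 V))).neighborFinset a).card ≤ A.card - 1) →
      (A.card * (d - A.card + 1) ≤ 2 * (d - 1) ∧ ¬ (d ≤ 2 * A.card))) := by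
  set m := (n + 1) / 2 with hm
  set k := A.card with hk
  have hm4 : 4 ≤ m := by omega
  have hmn : n ≤ 2 * m := by omega
  -- t a : number of E'-edges at a
  set t : V → ℕ := fun a => (E'.filter (fun e => a ∈ e)).card with ht
  -- neighborFinset of deleted graph
  have hdelnbr : ∀ a : V, (G.deleteEdges (↑E' : Set (Sym2 V))).neighborFinset a
      = (G.neighborFinset a).filter (fun b => s(a,b) ∉ E') := by
    intro a
    ext b
    simp [SimpleGraph.deleteEdges_adj, and_comm]
  -- t a equals number of neighbors b with s(a,b) ∈ E'
  have htcard : ∀ a : V, t a = ((G.neighborFinset a).filter (fun b => s(a,b) ∈ E')).card := by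
    intro a
    refine (Finset.card_bij (fun b _ => s(a,b)) ?_ ?_ ?_).symm
    · intro b hb
      simp only [Finset.mem_filter] at hb ⊢
      exact ⟨hb.2, by simp⟩
    · intro b1 h1 b2 h2 heq
      exact (Sym2.congr_right.mp heq)
    · intro e he
      simp only [Finset.mem_filter] at he
      obtain ⟨heE, hae⟩ := he
      obtain ⟨b, rfl⟩ := Sym2.mem_iff_exists.mp hae
      refine ⟨b, ?_, rfl⟩
      simp only [Finset.mem_filter, SimpleGraph.mem_neighborFinset]
      exact ⟨(SimpleGraph.mem_edgeSet G).mp (hsub heE), heE⟩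
  -- degree split
  have hsplit : ∀ a : V,
      ((G.deleteEdges (↑E' : Set (Sym2 V))).neighborFinset a).card + t a = d := by
    intro a
    rw [hdelnbr a, htcard a]
    have h := Finset.card_filter_add_card_filter_not
      (p := fun b => s(a,b) ∈ E') (s := G.neighborFinset a)
    have hdeg : (G.neighborFinset a).card = d := hreg a
    omega
  -- sum of t over A is at most 2 |E'|
  have hsum : ∑ a ∈ A, t a ≤ 2 * E'.card := by
    have heq : ∑ a ∈ A, t a = ∑ e ∈ E', (A.filter (fun v => v ∈ e)).card := by
      simp only [ht, Finset.card_filter]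
      rw [Finset.sum_comm]
    rw [heq]
    calc ∑ e ∈ E', (A.filter (fun v => v ∈ e)).card ≤ ∑ _e ∈ E', 2 :=
          Finset.sum_le_sum (fun e _ => sym2_filter_le_two A e)
      _ = 2 * E'.card := by rw [Finset.sum_const, smul_eq_mul, mul_comm]
  have hsumd : ∑ a ∈ A, t a ≤ 2 * (d - 1) := hsum.trans (by omega)
  have hkn : k ≤ n := by rw [hk, ← hcard]; exact Finset.card_le_univ A
  -- Part 1 : k ≤ m
  have part1 : k ≤ m := by
    by_contra hcon
    push_neg at hcon
    have hbound : ∀ a ∈ A, (d : ℤ) + k - n ≤ t a := by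
      intro a ha
      have hsub2 : (G.deleteEdges (↑E' : Set (Sym2 V))).neighborFinset a ⊆ Finset.univ \ A := by
        intro b hb
        rw [SimpleGraph.mem_neighborFinset] at hb
        simp only [Finset.mem_sdiff, Finset.mem_univ, true_and]
        intro hbA
        exact hind a ha b hbA hb
      have h1 := hsplit a
      have h2 : ((G.deleteEdges (↑E' : Set (Sym2 V))).neighborFinset a).card ≤ n - k := by
        have := Finset.card_le_card hsub2
        rwa [Finset.card_sdiff_of_subset (Finset.subset_univ A), Finset.card_univ, hcard] at this
      omega
    have hsum2 : (k : ℤ) * ((d : ℤ) + k - n) ≤ ∑ a ∈ A, (t a : ℤ) := by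
      have := Finset.card_nsmul_le_sum A (fun a => (t a : ℤ)) ((d : ℤ) + k - n) hbound
      rwa [nsmul_eq_mul, ← hk] at this
    have hsum3 : (∑ a ∈ A, (t a : ℤ)) ≤ 2 * ((d : ℤ) - 1) := by
      have h1 : ((∑ a ∈ A, t a : ℕ) : ℤ) = ∑ a ∈ A, (t a : ℤ) := Nat.cast_sum A t
      have h2 : ((∑ a ∈ A, t a : ℕ) : ℤ) ≤ ((2 * (d - 1) : ℕ) : ℤ) := by exact_mod_cast hsumd
      have h3 : ((2 * (d - 1) : ℕ) : ℤ) = 2 * ((d : ℤ) - 1) := by omega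
      rw [h1, h3] at h2
      exact h2
    have hkZ : (m : ℤ) + 1 ≤ k := by exact_mod_cast hcon
    have hdZ : (m : ℤ) + 2 ≤ d := by exact_mod_cast hd
    have hmnZ : (n : ℤ) ≤ 2 * m := by exact_mod_cast hmn
    have hm4Z : (4 : ℤ) ≤ m := by exact_mod_cast hm4
    have hknZ : (k : ℤ) ≤ n := by exact_mod_cast hkn
    nlinarith [hsum2.trans hsum3, mul_le_mul hkZ (by linarith : (d : ℤ) - m + 1 ≤ (k : ℤ) + d - n)
      (by linarith) (by positivity : (0:ℤ) ≤ (k:ℤ))]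
  refine ⟨part1, ?_⟩
  intro hA
  have hkd : k ≤ d - 2 := by omega
  have conj1 : k * (d - k + 1) ≤ 2 * (d - 1) := by
    have hbound : ∀ a ∈ A, d - k + 1 ≤ t a := by
      intro a ha
      have h1 := hsplit a
      have h2 := hA a ha
      have h3 : 1 ≤ k := Finset.card_pos.mpr ⟨a, ha⟩
      omega
    have := Finset.card_nsmul_le_sum A t (d - k + 1) hbound
    rw [smul_eq_mul, ← hk] at this
    exact this.trans hsumd
  refine ⟨conj1, ?_⟩
  intro hle
  have hk3 : 3 ≤ k := by omega
  have hq := conj1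
  zify [show k ≤ d by omega, show 1 ≤ d by omega] at hq
  have hprod : (1 : ℤ) ≤ ((k : ℤ) - 2) * ((d : ℤ) - k - 1) := by
    have h1 : (1 : ℤ) ≤ (k : ℤ) - 2 := by omega
    have h2 : (1 : ℤ) ≤ (d : ℤ) - k - 1 := by omega
    nlinarith
  nlinarith [hq, hprod]
end
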